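/- arXiv:2308.05041 — 4 statements merged into one kernel-verified Lean document; each statement's English description precedes it below -/
import Mathlib

section
/- Fix an even integer L ≥ 6, let Λ be the L×L toric grid graph, let η ∈ V_o and let ℓ₁, ℓ₂ be integers with min{ℓ₁,ℓ₂} ≥ L/2 and max{ℓ₁,ℓ₂} = L−1. Then the complement V ∖ R_{ℓ₁,ℓ₂}(η) of the odd rhombus consists exclusively of odd sites, and it contains exactly L − min{ℓ₁,ℓ₂} of them. -/
namespace HardCoreGrid

/-- Sites of the `L × L` toric grid graph. -/
abbrev Site (L : ℕ) := ZMod L × ZMod L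

/-- Two sites are adjacent iff they differ by `±1` in exactly one coordinate (mod `L`). -/
def adjacent (L : ℕ) (v w : Site L) : Prop :=
  (v.2 = w.2 ∧ (v.1 = w.1 + 1 ∨ w.1 = v.1 + 1)) ∨
  (v.1 = w.1 ∧ (v.2 = w.2 + 1 ∨ w.2 = v.2 + 1))

/-- A site is even iff the sum of its two coordinates is even. -/
def isEvenSite (L : ℕ) (v : Site L) : Prop := (v.1 + v.2).val % 2 = 0

instance decIsEvenSite (L : ℕ) (v : Site L) : Decidable (isEvenSite L v) :=
  inferInstanceAs (Decidable ((v.1 + v.2).val % 2 = 0))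

/-- The set of even sites. -/
def Ve (L : ℕ) : Set (Site L) := {v | isEvenSite L v}

/-- The set of odd sites. -/
def Vo (L : ℕ) : Set (Site L) := {v | ¬ isEvenSite L v}

/-- External boundary of a set of sites. -/
def extBoundary (L : ℕ) (A : Set (Site L)) : Set (Site L) :=
  {v | v ∉ A ∧ ∃ w ∈ A, adjacent L v w}

/-- The set `S_{ℓ₁,ℓ₂}(η)` of odd sites of a rhombus. -/
def Sset (L : ℕ) (η : Site L) (ℓ₁ ℓ₂ : ℕ) : Set (Site L) :=
  {v | ∃ k < ℓ₁, ∃ j < ℓ₂,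
    v = (η.1 + (k : ZMod L) + (j : ZMod L), η.2 + (k : ZMod L) - (j : ZMod L))}

/-- Non-degenerate odd rhombus `R_{ℓ₁,ℓ₂}(η) = S ∪ ∂⁺S`. -/
def rhombusND (L : ℕ) (η : Site L) (ℓ₁ ℓ₂ : ℕ) : Set (Site L) :=
  Sset L η ℓ₁ ℓ₂ ∪ extBoundary L (Sset L η ℓ₁ ℓ₂)

/-- Degenerate rhombus `R_{ℓ,0}(η)` (direction `(1,-1)`). -/
def degRhombus10 (L : ℕ) (η : Site L) (ℓ : ℕ) : Set (Site L) :=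
  {w | ∃ k ≤ ℓ, w = (η.1 + (k : ZMod L), η.2 - (k : ZMod L))}

/-- Degenerate rhombus `R_{0,ℓ}(η)` (direction `(1,1)`). -/
def degRhombus01 (L : ℕ) (η : Site L) (ℓ : ℕ) : Set (Site L) :=
  {w | ∃ k ≤ ℓ, w = (η.1 + (k : ZMod L), η.2 + (k : ZMod L))}

/-- General odd rhombus (including the degenerate ones). -/
def IsOddRhombus (L : ℕ) (R : Set (Site L)) : Prop :=
  (∃ η ∈ Vo L, ∃ ℓ₁, 1 ≤ ℓ₁ ∧ ℓ₁ ≤ L ∧ ∃ ℓ₂, 1 ≤ ℓ₂ ∧ ℓ₂ ≤ L ∧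
    R = rhombusND L η ℓ₁ ℓ₂) ∨
  (∃ η ∈ Ve L, ∃ ℓ ≤ L, R = degRhombus10 L η ℓ) ∨
  (∃ η ∈ Ve L, ∃ ℓ ≤ L, R = degRhombus01 L η ℓ)

/-- Edges between `A` and its complement (oriented from inside). -/
def boundaryPairs (L : ℕ) (A : Set (Site L)) : Set (Site L × Site L) :=
  {p | p.1 ∈ A ∧ p.2 ∉ A ∧ adjacent L p.1 p.2}

/-- Perimeter: number of edges with exactly one endpoint in `A`. -/
noncomputable def perimeter (L : ℕ) (A : Set (Site L)) : ℕ :=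
  (boundaryPairs L A).ncard

/-- Two distinct even sites at graph distance two. -/
def evenAdj (L : ℕ) (a b : Site L) : Prop :=
  a ∈ Ve L ∧ b ∈ Ve L ∧ a ≠ b ∧ ∃ w, adjacent L a w ∧ adjacent L w b

/-- Odd cluster: odd sites bring their four neighbours, and the even part is
connected in the distance-two graph on even sites. -/
def IsOddCluster (L : ℕ) (C : Set (Site L)) : Prop :=
  (∀ v ∈ C, v ∈ Vo L → ∀ w, adjacent L v w → w ∈ C) ∧
  (∀ a ∈ C ∩ Ve L, ∀ b ∈ C ∩ Ve L,
    Relation.ReflTransGen (fun x y => x ∈ C ∩ Ve L ∧ y ∈ C ∩ Ve L ∧ evenAdj L x y) a b)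

/-- `R` is the surrounding rhombus of `C`: a minimal odd rhombus containing `C`. -/
def IsSurroundingRhombus (L : ℕ) (C R : Set (Site L)) : Prop :=
  IsOddRhombus L R ∧ C ⊆ R ∧
  ∀ R', IsOddRhombus L R' → C ⊆ R' → R' ⊆ R → R' = R

/-- Hard-core configurations. -/
def IsConfig (L : ℕ) (σ : Site L → Bool) : Prop :=
  ∀ v w, adjacent L v w → ¬(σ v = true ∧ σ w = true)

/-- The configuration `e` occupying exactly the even sites. -/
def eCfg (L : ℕ) : Site L → Bool := fun v => decide (isEvenSite L v)

/-- The configuration `o` occupying exactly the odd sites. -/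
def oCfg (L : ℕ) : Site L → Bool := fun v => ! decide (isEvenSite L v)

/-- The Hamiltonian `H(σ) = -#{occupied sites}`. -/
noncomputable def energy (L : ℕ) (σ : Site L → Bool) : ℤ :=
  -(({v | σ v = true} : Set (Site L)).ncard : ℤ)

/-- Configurations differing in at most one site. -/
def stepRel (L : ℕ) (σ σ' : Site L → Bool) : Prop :=
  {v | σ v ≠ σ' v}.Subsingleton

/-- Configurations differing in exactly one site. -/
def stepRel1 (L : ℕ) (σ σ' : Site L → Bool) : Prop :=
  ∃ v, σ v ≠ σ' v ∧ ∀ w, σ w ≠ σ' w → w = v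

/-- A path: a list of hard-core configurations, consecutive ones differing in
at most one site. -/
def IsPath (L : ℕ) (ω : List (Site L → Bool)) : Prop :=
  (∀ ξ ∈ ω, IsConfig L ξ) ∧ ω.Chain' (stepRel L)

def IsPathFrom (L : ℕ) (ω : List (Site L → Bool)) (σ σ' : Site L → Bool) : Prop :=
  IsPath L ω ∧ ω.head? = some σ ∧ ω.getLast? = some σ'

/-- Odd region of a configuration: occupied odd sites and empty even sites. -/
def oddRegion (L : ℕ) (σ : Site L → Bool) : Set (Site L) :=
  {v | v ∈ Vo L ∧ σ v = true} ∪ {v | v ∈ Ve L ∧ σ v = false}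

/-- Adjacency used to split the odd region into its connected components. -/
def regionAdj (L : ℕ) (A : Set (Site L)) (a b : Site L) : Prop :=
  a ∈ A ∧ b ∈ A ∧ (adjacent L a b ∨ evenAdj L a b)

/-- `C` is a connected component of `A`. -/
def IsComponentOf (L : ℕ) (C A : Set (Site L)) : Prop :=
  ∃ v ∈ A, C = {w | Relation.ReflTransGen (regionAdj L A) v w}

/-- Number of occupied odd sites. -/
noncomputable def nOddOcc (L : ℕ) (σ : Site L → Bool) : ℕ :=
  ({v | v ∈ Vo L ∧ σ v = true} : Set (Site L)).ncard

/-- Number of occupied even sites. -/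
noncomputable def nEvenOcc (L : ℕ) (σ : Site L → Bool) : ℕ :=
  ({v | v ∈ Ve L ∧ σ v = true} : Set (Site L)).ncard

/-- `m(σ) = o(σ) - e(σ)`. -/
noncomputable def mval (L : ℕ) (σ : Site L → Bool) : ℤ :=
  (nOddOcc L σ : ℤ) - (nEvenOcc L σ : ℤ)

/-- A path is non-backtracking if it visits each manifold `V_m` at most once. -/
def NonBacktracking (L : ℕ) (ω : List (Site L → Bool)) : Prop :=
  ω.Pairwise (fun a b => mval L a ≠ mval L b)

/-- A diagonal of `C` broken in some `k ≥ 1` sites, in direction `d`. -/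
def BrokenDiag (L : ℕ) (C : Set (Site L)) (d : Site L) : Prop :=
  ∃ k : ℕ, 1 ≤ k ∧ ∃ z : ℕ → Site L,
    (∀ i < k, z i ∈ Vo L ∧ z i ∉ C) ∧
    (∀ i, i + 1 < k → z (i + 1) = z i + d) ∧
    z 0 - d ∈ C ∧ z (k - 1) + d ∈ C

/-- `C` has a broken (increasing or decreasing) diagonal. -/
def HasBrokenDiagonal (L : ℕ) (C : Set (Site L)) : Prop :=
  BrokenDiag L C (1, 1) ∨ BrokenDiag L C (1, -1)

/-- The `k` sites `z, z+d, …, z+(k-1)d`. -/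
def barSet (L : ℕ) (z d : Site L) (k : ℕ) : Set (Site L) :=
  {w | ∃ i : ℕ, i < k ∧ w = z + i • d}

/-- Diagonal bar of length `k`: `k` odd sites with consecutive ones differing
by `(1,1)`, or all by `(1,-1)`. -/
def IsDiagBar (L : ℕ) (B : Set (Site L)) (k : ℕ) : Prop :=
  ∃ z ∈ Vo L, B = barSet L z (1, 1) k ∨ B = barSet L z (1, -1) k

/-- Bar of length `k`: `k` odd sites in a single column, row or diagonal with
consecutive ones at distance 2. -/
def IsBar (L : ℕ) (B : Set (Site L)) (k : ℕ) : Prop :=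
  ∃ z ∈ Vo L, B = barSet L z (0, 2) k ∨ B = barSet L z (2, 0) k ∨
    B = barSet L z (1, 1) k ∨ B = barSet L z (1, -1) k

/-- Every site of `B` is at graph distance two from the set `S`. -/
def AttachedTo (L : ℕ) (B S : Set (Site L)) : Prop :=
  ∀ b ∈ B, b ∉ S ∧ (∀ s ∈ S, ¬ adjacent L b s) ∧
    ∃ s ∈ S, ∃ w, adjacent L b w ∧ adjacent L w s

/-- Number of odd sites of `C` in the column `x`. -/
noncomputable def colCount (L : ℕ) (C : Set (Site L)) (x : ZMod L) : ℕ :=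
  ({v | v ∈ C ∧ v ∈ Vo L ∧ v.1 = x} : Set (Site L)).ncard

/-- Number of odd sites of `C` in the row `y`. -/
noncomputable def rowCount (L : ℕ) (C : Set (Site L)) (y : ZMod L) : ℕ :=
  ({v | v ∈ C ∧ v ∈ Vo L ∧ v.2 = y} : Set (Site L)).ncard

/-- A set winds around the torus if it contains `L/2` odd sites in a single
column or row. -/
def Winds (L : ℕ) (C : Set (Site L)) : Prop :=
  (∃ x, L / 2 ≤ colCount L C x) ∨ (∃ y, L / 2 ≤ rowCount L C y)

/-- Monotone odd cluster. -/
def MonotoneCluster (L : ℕ) (C : Set (Site L)) : Prop :=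
  ∃ R, IsSurroundingRhombus L C R ∧
    ((¬ Winds L R ∧ perimeter L C = perimeter L R) ∨
     (Winds L R ∧ perimeter L C = 4 * L))

/-- Antiknob: an odd site not in `C` with at least three neighbouring even
sites in `C`. -/
def IsAntiknob (L : ℕ) (C : Set (Site L)) (z : Site L) : Prop :=
  z ∈ Vo L ∧ z ∉ C ∧
  3 ≤ ({w | adjacent L z w ∧ w ∈ Ve L ∧ w ∈ C} : Set (Site L)).ncard

/-- The set `C_ir(e,o)`. -/
def Cir (L : ℕ) : Set (Site L → Bool) :=
  {σ | IsConfig L σ ∧ ∃ η ∈ Vo L, ∃ v ∈ Ve L, ∃ D : Set (Site L),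
    (D = degRhombus10 L v 1 ∨ D = degRhombus01 L v 1) ∧
    Disjoint (rhombusND L η (L / 2 - 1) (L / 2 - 1)) D ∧
    (∀ a ∈ D, ∀ b ∈ rhombusND L η (L / 2 - 1) (L / 2 - 1), ¬ adjacent L a b) ∧
    (∃ a ∈ D, ∃ b ∈ rhombusND L η (L / 2 - 1) (L / 2 - 1), ∃ w,
      adjacent L a w ∧ adjacent L w b) ∧
    oddRegion L σ = rhombusND L η (L / 2 - 1) (L / 2 - 1) ∪ D}

/-- The set `C_gr(e,o)`. -/
def Cgr (L : ℕ) : Set (Site L → Bool) :=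
  {σ | IsConfig L σ ∧ ∃ C : Set (Site L), ∃ v ∈ Ve L,
    IsOddCluster L C ∧ (C ∩ Vo L).Nonempty ∧ MonotoneCluster L C ∧
    (∃ η ∈ Vo L, ∃ k, 1 ≤ k ∧ k ≤ L / 2 - 1 ∧ ∃ B,
      IsDiagBar L B k ∧ AttachedTo L B (Sset L η (L / 2 - 1) (L / 2 - 1)) ∧
      C = rhombusND L η (L / 2 - 1) (L / 2 - 1) ∪ B ∪ extBoundary L B) ∧
    v ∉ C ∧ (∃ z, IsAntiknob L C z ∧ adjacent L v z) ∧
    oddRegion L σ = C ∪ {v}}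

/-- The set `C_cr(e,o)`. -/
def Ccr (L : ℕ) : Set (Site L → Bool) :=
  {σ | IsConfig L σ ∧ ∃ C : Set (Site L), ∃ v ∈ Ve L,
    IsOddCluster L C ∧ (C ∩ Vo L).Nonempty ∧ MonotoneCluster L C ∧
    (∃ η ∈ Vo L, ∃ k, 1 ≤ k ∧ k ≤ L / 2 - 2 ∧ ∃ B,
      IsDiagBar L B k ∧ AttachedTo L B (Sset L η (L / 2 - 1) (L / 2)) ∧
      C = rhombusND L η (L / 2 - 1) (L / 2) ∪ B ∪ extBoundary L B) ∧
    v ∉ C ∧ (∃ z, IsAntiknob L C z ∧ adjacent L v z) ∧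
    oddRegion L σ = C ∪ {v}}

/-- The set `C_sb(e,o)`. -/
def Csb (L : ℕ) : Set (Site L → Bool) :=
  {σ | IsConfig L σ ∧ ∃ C : Set (Site L), ∃ d₁ d₂ : Site L,
    IsOddCluster L C ∧ (C ∩ Vo L).Nonempty ∧ MonotoneCluster L C ∧
    ((∃ x y₀ : ZMod L,
        C ∩ Vo L = {v | ∃ i : ℕ, i < L / 2 - 1 ∧ v = (x, y₀ + 2 * (i : ZMod L))}) ∨
     (∃ y x₀ : ZMod L,
        C ∩ Vo L = {v | ∃ i : ℕ, i < L / 2 - 1 ∧ v = (x₀ + 2 * (i : ZMod L), y)})) ∧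
    d₁ ≠ d₂ ∧ d₁ ∈ Ve L ∧ d₂ ∈ Ve L ∧ d₁ ∉ C ∧ d₂ ∉ C ∧
    (∃ z, IsAntiknob L C z ∧ adjacent L d₁ z ∧ adjacent L d₂ z) ∧
    oddRegion L σ = C ∪ {d₁, d₂}}

/-- The odd sites of an `m`-uple bridge (`m` contiguous columns or rows). -/
def bridgeOddSet (L : ℕ) (x : ZMod L) (m : ℕ) (vert : Bool) : Set (Site L) :=
  if vert then {v | v ∈ Vo L ∧ ∃ i : ℕ, i < m ∧ v.1 = x + (i : ZMod L)}
  else {v | v ∈ Vo L ∧ ∃ i : ℕ, i < m ∧ v.2 = x + (i : ZMod L)}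

def IsMupleBridgeSet (L : ℕ) (S : Set (Site L)) (m : ℕ) : Prop :=
  ∃ x vert, S = bridgeOddSet L x m vert

/-- A family of pairwise disjoint bars attached to `S`. -/
def BarsFamily (L : ℕ) (r : ℕ) (B : Fin r → Set (Site L)) (len : Fin r → ℕ)
    (S : Set (Site L)) : Prop :=
  (∀ i, IsBar L (B i) (len i)) ∧ (∀ i, AttachedTo L (B i) S) ∧
  (∀ i j, i ≠ j → Disjoint (B i) (B j))

/-- The set `C_mb(e,o)`. -/
def Cmb (L : ℕ) : Set (Site L → Bool) :=
  {σ | IsConfig L σ ∧ ∃ C : Set (Site L), ∃ v : Site L,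
    IsOddCluster L C ∧ (C ∩ Vo L).Nonempty ∧ MonotoneCluster L C ∧
    v ∈ Ve L ∧ v ∉ C ∧ (∃ z, IsAntiknob L C z ∧ adjacent L v z) ∧
    oddRegion L σ = C ∪ {v} ∧
    ((∃ S, IsMupleBridgeSet L S (L - 3) ∧ C = S ∪ extBoundary L S) ∨
     (∃ m, 2 ≤ m ∧ m < L - 3 ∧ ∃ S, IsMupleBridgeSet L S m ∧
       ∃ k ≤ L / 2 - 1, ∃ r : ℕ, ∃ B : Fin r → Set (Site L), ∃ len : Fin r → ℕ,
         BarsFamily L r B len S ∧ Finset.univ.sum len = k ∧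
         C = (S ∪ ⋃ i, B i) ∪ extBoundary L (S ∪ ⋃ i, B i)) ∨
     (∃ S, IsMupleBridgeSet L S 1 ∧
       ∃ k ≤ L / 2 - 1, ∃ r : ℕ, ∃ B : Fin r → Set (Site L), ∃ len : Fin r → ℕ,
         BarsFamily L r B len S ∧ Finset.univ.sum len = k ∧
         C = (S ∪ ⋃ i, B i) ∪ extBoundary L (S ∪ ⋃ i, B i) ∧
         ∀ η ∈ Vo L, ¬ rhombusND L η (L / 2 - 1) (L / 2) ⊆ C))}

/-- Distance between two columns (or rows) of the torus. -/
def zdist (L : ℕ) (a b : ZMod L) : ℕ := min (a - b).val (b - a).val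

/-- The set `C_ib(e,o)`. -/
def Cib (L : ℕ) : Set (Site L → Bool) :=
  {σ | IsConfig L σ ∧ ∃ C : Set (Site L), ∃ v : Site L,
    IsOddCluster L C ∧ (C ∩ Vo L).Nonempty ∧ MonotoneCluster L C ∧
    (∀ η ∈ Vo L, ¬ rhombusND L η (L / 2 - 1) (L / 2 - 1) ⊆ C) ∧
    v ∈ Ve L ∧ v ∉ C ∧ (∃ z, IsAntiknob L C z ∧ adjacent L v z) ∧
    oddRegion L σ = C ∪ {v} ∧
    ((∃ x : ZMod L, colCount L C x = L / 2 - 1 ∧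
        ∀ x', x' ≠ x → colCount L C x' ≤ L / 2 - 1 - zdist L x' x) ∨
     (∃ x : ZMod L, colCount L C x = L / 2 - 1 ∧ colCount L C (x + 1) = L / 2 - 1 ∧
        ∀ x', x' ≠ x → x' ≠ x + 1 →
          colCount L C x' ≤ L / 2 - 1 - min (zdist L x' x) (zdist L x' (x + 1))) ∨
     (∃ y : ZMod L, rowCount L C y = L / 2 - 1 ∧
        ∀ y', y' ≠ y → rowCount L C y' ≤ L / 2 - 1 - zdist L y' y) ∨
     (∃ y : ZMod L, rowCount L C y = L / 2 - 1 ∧ rowCount L C (y + 1) = L / 2 - 1 ∧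
        ∀ y', y' ≠ y → y' ≠ y + 1 →
          rowCount L C y' ≤ L / 2 - 1 - min (zdist L y' y) (zdist L y' (y + 1)))) ∧
    (∃ R, IsSurroundingRhombus L C R ∧
      ∀ η ∈ Vo L, ¬ R ⊆ rhombusND L η (L / 2 - 1) (L / 2 - 1))}

/-- Maximal energy along a path. -/
noncomputable def pathMax (L : ℕ) (ω : List (Site L → Bool)) : WithBot ℤ :=
  (ω.map (energy L)).maximum

/-- Optimal paths from `e` to `o`. -/
def IsOptimalPath (L : ℕ) (ω : List (Site L → Bool)) : Prop :=
  IsPathFrom L ω (eCfg L) (oCfg L) ∧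
  ∀ ω', IsPathFrom L ω' (eCfg L) (oCfg L) → pathMax L ω ≤ pathMax L ω'

/-- The saddles `S(ω)` of a path `ω`. -/
def saddleSet (L : ℕ) (ω : List (Site L → Bool)) : Set (Site L → Bool) :=
  {ξ | ξ ∈ ω ∧ (energy L ξ : WithBot ℤ) = pathMax L ω}

/-- A saddle: a maximal-energy configuration of some optimal path. -/
def IsSaddle (L : ℕ) (ξ : Site L → Bool) : Prop :=
  ∃ ω, IsOptimalPath L ω ∧ ξ ∈ saddleSet L ω

/-- Essential saddles. -/
def IsEssentialSaddle (L : ℕ) (ξ : Site L → Bool) : Prop :=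
  IsSaddle L ξ ∧
  ((∃ ω, IsOptimalPath L ω ∧ saddleSet L ω = {ξ}) ∨
   (∃ ω, IsOptimalPath L ω ∧ ξ ∈ saddleSet L ω ∧
     ∀ ω', IsOptimalPath L ω' → ¬ saddleSet L ω' ⊆ saddleSet L ω \ {ξ}))

section RhombusAux

variable {L : ℕ}

private lemma valAddPar (h2 : 2 ∣ L) [NeZero L] (x y : ZMod L) :
    (x + y).val % 2 = (x.val + y.val) % 2 := by
  rw [ZMod.val_add]; exact Nat.mod_mod_of_dvd _ h2

private lemma valSubPar (h2 : 2 ∣ L) [NeZero L] (x y : ZMod L) :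
    (x - y).val % 2 = (x.val + y.val) % 2 := by
  have h := valAddPar h2 (x - y) y
  have h' : x - y + y = x := by ring
  rw [h'] at h
  omega

private lemma even_shift (h2 : 2 ∣ L) [NeZero L] {v w : Site L} (d : ZMod L)
    (h : v.1 + v.2 = w.1 + w.2 + (d + d)) :
    (isEvenSite L v ↔ isEvenSite L w) := by
  have e1 := valAddPar h2 (w.1 + w.2) (d + d)
  have e2 := valAddPar h2 d d
  unfold isEvenSite
  rw [h]
  omega

private lemma odd_shift (h2 : 2 ∣ L) (hL6 : 6 ≤ L) {v w : Site L} (d : ZMod L)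
    (h : v.1 + v.2 = w.1 + w.2 + (d + d) + 1) :
    (isEvenSite L v ↔ ¬ isEvenSite L w) := by
  haveI : NeZero L := ⟨by omega⟩
  have e1 := valAddPar h2 (w.1 + w.2 + (d + d)) 1
  have e2 := valAddPar h2 (w.1 + w.2) (d + d)
  have e3 := valAddPar h2 d d
  haveI : Fact (1 < L) := ⟨by omega⟩
  have e4 : (1 : ZMod L).val = 1 := ZMod.val_one L
  unfold isEvenSite
  rw [h]
  omega

private lemma adjacent_parity (h2 : 2 ∣ L) (hL6 : 6 ≤ L) {v w : Site L}
    (h : adjacent L v w) : (isEvenSite L v ↔ ¬ isEvenSite L w) := by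
  rcases h with ⟨h1, h3 | h3⟩ | ⟨h1, h3 | h3⟩
  · exact odd_shift h2 hL6 0 (by linear_combination h3 + h1)
  · have := odd_shift h2 hL6 (v := w) (w := v) 0 (by linear_combination h3 - h1)
    tauto
  · exact odd_shift h2 hL6 0 (by linear_combination h1 + h3)
  · have := odd_shift h2 hL6 (v := w) (w := v) 0 (by linear_combination h3 - h1)
    tauto

private lemma Sset_subset_Vo (h2 : 2 ∣ L) (hL6 : 6 ≤ L) {η : Site L} (hη : η ∈ Vo L)
    (ℓ₁ ℓ₂ : ℕ) : Sset L η ℓ₁ ℓ₂ ⊆ Vo L := by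
  haveI : NeZero L := ⟨by omega⟩
  rintro v ⟨k, hk, j, hj, rfl⟩
  have he : isEvenSite L ((η.1 + (k : ZMod L) + (j : ZMod L),
      η.2 + (k : ZMod L) - (j : ZMod L)) : Site L) ↔ isEvenSite L η :=
    even_shift h2 (k : ZMod L)
      (by
        show η.1 + (k : ZMod L) + (j : ZMod L) + (η.2 + (k : ZMod L) - (j : ZMod L))
          = η.1 + η.2 + ((k : ZMod L) + (k : ZMod L))
        ring)
  exact fun hc => hη (he.mp hc)

private lemma extB_subset_Ve (h2 : 2 ∣ L) (hL6 : 6 ≤ L) {η : Site L} (hη : η ∈ Vo L)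
    (ℓ₁ ℓ₂ : ℕ) : extBoundary L (Sset L η ℓ₁ ℓ₂) ⊆ Ve L := by
  rintro v ⟨hvS, w, hwS, hadj⟩
  have hw : ¬ isEvenSite L w := Sset_subset_Vo h2 hL6 hη _ _ hwS
  have hp := adjacent_parity h2 hL6 hadj
  show isEvenSite L v
  tauto

private def fE (η : Site L) (j : ℕ) : Site L :=
  (η.1 + (j : ZMod L) - 1, η.2 - (j : ZMod L) - 1)

private lemma fE_mem_Vo (h2 : 2 ∣ L) (hL6 : 6 ≤ L) {η : Site L} (hη : η ∈ Vo L)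
    (j : ℕ) : fE η j ∈ Vo L := by
  haveI : NeZero L := ⟨by omega⟩
  have he : isEvenSite L (fE η j) ↔ isEvenSite L η :=
    even_shift h2 (-1)
      (by
        show η.1 + (j : ZMod L) - 1 + (η.2 - (j : ZMod L) - 1)
          = η.1 + η.2 + ((-1 : ZMod L) + (-1 : ZMod L))
        ring)
  exact fun hc => hη (he.mp hc)

private lemma cast_half (h2 : 2 ∣ L) :
    ((L / 2 : ℕ) : ZMod L) + ((L / 2 : ℕ) : ZMod L) = 0 := by
  rw [← Nat.cast_add]
  have hh : L / 2 + L / 2 = L := by omega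
  rw [hh, ZMod.natCast_self]

private lemma two_ne (hL6 : 6 ≤ L) : ((2 : ℕ) : ZMod L) ≠ 0 := by
  haveI : NeZero L := ⟨by omega⟩
  rw [Ne, ZMod.natCast_eq_zero_iff]
  intro hdvd
  have := Nat.le_of_dvd (by norm_num) hdvd
  omega

private lemma double_eq_zero (h2 : 2 ∣ L) (hL6 : 6 ≤ L) (x : ZMod L)
    (h : x + x = 0) : x = 0 ∨ x = ((L / 2 : ℕ) : ZMod L) := by
  haveI : NeZero L := ⟨by omega⟩
  have hx : ((x.val : ℕ) : ZMod L) = x := by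
    simp [ZMod.natCast_val, ZMod.cast_id]
  have hv : ((x.val + x.val : ℕ) : ZMod L) = 0 := by
    push_cast [ZMod.natCast_val, ZMod.cast_id]
    exact h
  rw [ZMod.natCast_eq_zero_iff] at hv
  have hlt := ZMod.val_lt x
  obtain ⟨t, ht⟩ := hv
  have ht1 : t < 2 := by
    by_contra hcon
    push_neg at hcon
    have h2L : L * 2 ≤ L * t := Nat.mul_le_mul_left L hcon
    omega
  have hval : x.val = 0 ∨ x.val = L / 2 := by
    interval_cases t <;> omega
  rcases hval with h' | h'
  · left; rw [← hx, h']; simp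
  · right; rw [← hx, h']

private lemma mem_S_or_E (h2 : 2 ∣ L) (hL6 : 6 ≤ L) {η : Site L} (hη : η ∈ Vo L)
    {m : ℕ} (hm1 : L / 2 ≤ m) (hm2 : m ≤ L - 1) {v : Site L} (hv : v ∈ Vo L) :
    v ∈ Sset L η (L - 1) m ∨ ∃ j, m - L / 2 ≤ j ∧ j < L / 2 ∧ v = fE η j := by
  haveI : NeZero L := ⟨by omega⟩
  set a := v.1 - η.1 with ha
  set b := v.2 - η.2 with hb
  have hva : v.1 = η.1 + a := by rw [ha]; ring
  have hvb : v.2 = η.2 + b := by rw [hb]; ring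
  have hvo : ¬ (v.1 + v.2).val % 2 = 0 := hv
  have hηo : ¬ (η.1 + η.2).val % 2 = 0 := hη
  have habe : (a + b).val % 2 = 0 := by
    have h' : a + b = (v.1 + v.2) - (η.1 + η.2) := by rw [ha, hb]; ring
    rw [h', valSubPar h2]
    omega
  have habs : (a - b).val % 2 = 0 := by
    have h' : a - b = (a + b) - (b + b) := by ring
    have hbb := valAddPar h2 b b
    rw [h', valSubPar h2]
    omega
  set k0 := (a + b).val / 2 with hk0def
  set j0 := (a - b).val / 2 with hj0def
  have hk0 : 2 * ((k0 : ℕ) : ZMod L) = a + b := by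
    have h1 : ((2 * k0 : ℕ) : ZMod L) = (((a + b).val : ℕ) : ZMod L) := by
      congr 1
      omega
    rw [ZMod.natCast_val, ZMod.cast_id] at h1
    push_cast at h1
    linear_combination h1
  have hj0 : 2 * ((j0 : ℕ) : ZMod L) = a - b := by
    have h1 : ((2 * j0 : ℕ) : ZMod L) = (((a - b).val : ℕ) : ZMod L) := by
      congr 1
      omega
    rw [ZMod.natCast_val, ZMod.cast_id] at h1
    push_cast at h1
    linear_combination h1
  have hk0lt : k0 < L / 2 := by
    have := ZMod.val_lt (a + b)
    omega
  have hj0lt : j0 < L / 2 := by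
    have := ZMod.val_lt (a - b)
    omega
  have hd : (((k0 + j0 : ℕ) : ZMod L) - a) + (((k0 + j0 : ℕ) : ZMod L) - a) = 0 := by
    push_cast
    linear_combination hk0 + hj0
  rcases double_eq_zero h2 hL6 _ hd with hA | hB
  · -- case A
    left
    have h3 : ((k0 : ℕ) : ZMod L) + ((j0 : ℕ) : ZMod L) = a := by
      push_cast at hA
      linear_combination hA
    refine ⟨k0, by omega, j0, by omega, ?_⟩
    rw [Prod.ext_iff]
    refine ⟨?_, ?_⟩
    · show v.1 = η.1 + (k0 : ZMod L) + (j0 : ZMod L)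
      rw [hva]; linear_combination -h3
    · show v.2 = η.2 + (k0 : ZMod L) - (j0 : ZMod L)
      rw [hvb]; linear_combination h3 - hk0
  · -- case B
    have hc := cast_half h2
    have h3 : ((k0 : ℕ) : ZMod L) + ((j0 : ℕ) : ZMod L)
        = a + ((L / 2 : ℕ) : ZMod L) := by
      push_cast at hB
      linear_combination hB
    by_cases hk : k0 + 1 < L / 2
    · left
      refine ⟨k0 + L / 2, by omega, j0, by omega, ?_⟩
      rw [Prod.ext_iff]
      refine ⟨?_, ?_⟩
      · show v.1 = η.1 + ((k0 + L / 2 : ℕ) : ZMod L) + ((j0 : ℕ) : ZMod L)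
        rw [hva]; push_cast
        linear_combination -h3 - hc
      · show v.2 = η.2 + ((k0 + L / 2 : ℕ) : ZMod L) - ((j0 : ℕ) : ZMod L)
        rw [hvb]; push_cast
        linear_combination h3 - hk0
    · have hk0eq : k0 = L / 2 - 1 := by omega
      have hkc : ((k0 : ℕ) : ZMod L) = ((L / 2 : ℕ) : ZMod L) - 1 := by
        rw [hk0eq, Nat.cast_sub (by omega : 1 ≤ L / 2), Nat.cast_one]
      by_cases hj : j0 + L / 2 < m
      · left
        refine ⟨k0, by omega, j0 + L / 2, hj, ?_⟩
        rw [Prod.ext_iff]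
        refine ⟨?_, ?_⟩
        · show v.1 = η.1 + ((k0 : ℕ) : ZMod L) + ((j0 + L / 2 : ℕ) : ZMod L)
          rw [hva]; push_cast
          linear_combination -h3 - hc
        · show v.2 = η.2 + ((k0 : ℕ) : ZMod L) - ((j0 + L / 2 : ℕ) : ZMod L)
          rw [hvb]; push_cast
          linear_combination h3 - hk0 + hc
      · right
        refine ⟨j0, by omega, hj0lt, ?_⟩
        rw [Prod.ext_iff]
        refine ⟨?_, ?_⟩
        · show v.1 = η.1 + (j0 : ZMod L) - 1
          rw [hva]; linear_combination hkc - h3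
        · show v.2 = η.2 - (j0 : ZMod L) - 1
          rw [hvb]; linear_combination h3 - hk0 + hkc + hc

private lemma fE_notMem_S (h2 : 2 ∣ L) (hL6 : 6 ≤ L) {η : Site L}
    {m : ℕ} (hm1 : L / 2 ≤ m) (hm2 : m ≤ L - 1) {j : ℕ} (hj1 : m - L / 2 ≤ j)
    (hj2 : j < L / 2) : fE η j ∉ Sset L η (L - 1) m := by
  haveI : NeZero L := ⟨by omega⟩
  rintro ⟨k, hk, j', hj', heq⟩
  have h1 : η.1 + (j : ZMod L) - 1 = η.1 + (k : ZMod L) + (j' : ZMod L) :=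
    congrArg Prod.fst heq
  have h2' : η.2 - (j : ZMod L) - 1 = η.2 + (k : ZMod L) - (j' : ZMod L) :=
    congrArg Prod.snd heq
  have hkk : ((2 * k + 2 : ℕ) : ZMod L) = 0 := by
    push_cast
    linear_combination -h1 - h2'
  rw [ZMod.natCast_eq_zero_iff] at hkk
  have hkeq : k = L / 2 - 1 := by
    obtain ⟨t, ht⟩ := hkk
    have ht1 : t < 2 := by
      by_contra hcon
      push_neg at hcon
      have h2L : L * 2 ≤ L * t := Nat.mul_le_mul_left L hcon
      omega
    interval_cases t <;> omega
  have hkc : ((k : ℕ) : ZMod L) = ((L / 2 : ℕ) : ZMod L) - 1 := by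
    rw [hkeq, Nat.cast_sub (by omega : 1 ≤ L / 2), Nat.cast_one]
  have hc := cast_half h2
  have hj'' : ((j' : ℕ) : ZMod L) = ((j + L / 2 : ℕ) : ZMod L) := by
    push_cast
    linear_combination -h1 - hkc - hc
  have hveq : j' = j + L / 2 := by
    have hval := congrArg ZMod.val hj''
    rwa [ZMod.val_cast_of_lt (by omega), ZMod.val_cast_of_lt (by omega)] at hval
  omega

private lemma card_Efin (h2 : 2 ∣ L) (hL6 : 6 ≤ L) (η : Site L) {m : ℕ}
    (hm1 : L / 2 ≤ m) (hm2 : m ≤ L - 1) :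
    ((Finset.Ico (m - L / 2) (L / 2)).image (fE η)).card = L - m := by
  haveI : NeZero L := ⟨by omega⟩
  have hinj : Set.InjOn (fE η) ↑(Finset.Ico (m - L / 2) (L / 2)) := by
    intro x hx y hy hxy
    simp only [Finset.coe_Ico, Set.mem_Ico] at hx hy
    have h1 : η.1 + (x : ZMod L) - 1 = η.1 + (y : ZMod L) - 1 :=
      congrArg Prod.fst hxy
    have h2' : ((x : ℕ) : ZMod L) = ((y : ℕ) : ZMod L) := by linear_combination h1
    have hval := congrArg ZMod.val h2'
    rwa [ZMod.val_cast_of_lt (by omega), ZMod.val_cast_of_lt (by omega)] at hval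
  rw [Finset.card_image_of_injOn hinj, Nat.card_Ico]
  omega

private lemma even_mem_rhombus (h2 : 2 ∣ L) (hL6 : 6 ≤ L) {η : Site L} (hη : η ∈ Vo L)
    {m : ℕ} (hm1 : L / 2 ≤ m) (hm2 : m ≤ L - 1) {v : Site L} (hv : isEvenSite L v) :
    v ∈ rhombusND L η (L - 1) m := by
  haveI : NeZero L := ⟨by omega⟩
  have hvnS : v ∉ Sset L η (L - 1) m := fun hc => Sset_subset_Vo h2 hL6 hη _ _ hc hv
  have hadj : adjacent L v (v.1 + 1, v.2) := Or.inl ⟨rfl, Or.inr rfl⟩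
  have hw : ((v.1 + 1, v.2) : Site L) ∈ Vo L :=
    (adjacent_parity h2 hL6 hadj).mp hv
  rcases mem_S_or_E h2 hL6 hη hm1 hm2 hw with hS | ⟨j, hj1, hj2, hwE⟩
  · exact Set.mem_union_right _ ⟨hvnS, (v.1 + 1, v.2), hS, hadj⟩
  · have hadj' : adjacent L v (v.1 - 1, v.2) := Or.inl ⟨rfl, Or.inl (by ring)⟩
    have hw' : ((v.1 - 1, v.2) : Site L) ∈ Vo L :=
      (adjacent_parity h2 hL6 hadj').mp hv
    rcases mem_S_or_E h2 hL6 hη hm1 hm2 hw' with hS' | ⟨j', hj1', hj2', hw'E⟩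
    · exact Set.mem_union_right _ ⟨hvnS, (v.1 - 1, v.2), hS', hadj'⟩
    · exfalso
      have e1 : (v.1 + 1) + v.2 = η.1 + η.2 - 2 := by
        have := congrArg (fun p : Site L => p.1 + p.2) hwE
        simp only [fE] at this
        linear_combination this
      have e2 : (v.1 - 1) + v.2 = η.1 + η.2 - 2 := by
        have := congrArg (fun p : Site L => p.1 + p.2) hw'E
        simp only [fE] at this
        linear_combination this
      have h20 : ((2 : ℕ) : ZMod L) = 0 := by
        push_cast
        linear_combination e1 - e2
      exact two_ne hL6 h20

private lemma core (h2 : 2 ∣ L) (hL6 : 6 ≤ L) {η : Site L} (hη : η ∈ Vo L)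
    {m : ℕ} (hm1 : L / 2 ≤ m) (hm2 : m ≤ L - 1) :
    (rhombusND L η (L - 1) m)ᶜ ⊆ Vo L ∧
      ((rhombusND L η (L - 1) m)ᶜ).ncard = L - m := by
  haveI : NeZero L := ⟨by omega⟩
  have hset : (rhombusND L η (L - 1) m)ᶜ
      = ↑((Finset.Ico (m - L / 2) (L / 2)).image (fE η)) := by
    ext v
    simp only [Set.mem_compl_iff, Finset.coe_image, Finset.coe_Ico, Set.mem_image,
      Set.mem_Ico]
    constructor
    · intro hvR
      by_cases hev : isEvenSite L v
      · exact absurd (even_mem_rhombus h2 hL6 hη hm1 hm2 hev) hvR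
      · rcases mem_S_or_E h2 hL6 hη hm1 hm2 hev with hS | ⟨j, hj1, hj2, hvE⟩
        · exact absurd (Set.mem_union_left _ hS) hvR
        · exact ⟨j, ⟨hj1, hj2⟩, hvE.symm⟩
    · rintro ⟨j, ⟨hj1, hj2⟩, rfl⟩
      intro hmem
      rcases hmem with hS | hbd
      · exact fE_notMem_S h2 hL6 hm1 hm2 hj1 hj2 hS
      · exact fE_mem_Vo h2 hL6 hη j (extB_subset_Ve h2 hL6 hη _ _ hbd)
  refine ⟨?_, ?_⟩
  · rw [hset]
    rintro v hv
    simp only [Finset.coe_image, Finset.coe_Ico, Set.mem_image, Set.mem_Ico] at hv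
    obtain ⟨j, _, rfl⟩ := hv
    exact fE_mem_Vo h2 hL6 hη j
  · rw [hset, Set.ncard_coe_finset]
    exact card_Efin h2 hL6 η hm1 hm2

private def phi (η v : Site L) : Site L := (v.1, η.2 + η.2 - v.2)

private lemma phi_invol (η : Site L) : Function.Involutive (phi η) := by
  intro v
  rw [Prod.ext_iff]
  exact ⟨rfl, by simp only [phi]; ring⟩

private lemma isEvenSite_phi (h2 : 2 ∣ L) [NeZero L] (η v : Site L) :
    isEvenSite L (phi η v) ↔ isEvenSite L v := by
  apply even_shift h2 (η.2 - v.2)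
  show v.1 + (η.2 + η.2 - v.2) = v.1 + v.2 + ((η.2 - v.2) + (η.2 - v.2))
  ring

private lemma adjacent_phi (η : Site L) {v w : Site L} (h : adjacent L v w) :
    adjacent L (phi η v) (phi η w) := by
  rcases h with ⟨h1, h3 | h3⟩ | ⟨h1, h3 | h3⟩
  · exact Or.inl ⟨show η.2 + η.2 - v.2 = η.2 + η.2 - w.2 by rw [h1], Or.inl h3⟩
  · exact Or.inl ⟨show η.2 + η.2 - v.2 = η.2 + η.2 - w.2 by rw [h1], Or.inr h3⟩
  · exact Or.inr ⟨h1, Or.inr (show η.2 + η.2 - w.2 = η.2 + η.2 - v.2 + 1 by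
      rw [h3]; ring)⟩
  · exact Or.inr ⟨h1, Or.inl (show η.2 + η.2 - v.2 = η.2 + η.2 - w.2 + 1 by
      rw [h3]; ring)⟩

private lemma Sset_phi (η : Site L) (ℓ₁ ℓ₂ : ℕ) :
    Sset L η ℓ₂ ℓ₁ = phi η '' Sset L η ℓ₁ ℓ₂ := by
  ext v
  constructor
  · rintro ⟨k, hk, j, hj, rfl⟩
    refine ⟨(η.1 + (j : ZMod L) + (k : ZMod L), η.2 + (j : ZMod L) - (k : ZMod L)),
      ⟨j, hj, k, hk, rfl⟩, ?_⟩
    rw [Prod.ext_iff]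
    refine ⟨?_, ?_⟩
    · show η.1 + (j : ZMod L) + (k : ZMod L) = η.1 + (k : ZMod L) + (j : ZMod L)
      ring
    · show η.2 + η.2 - (η.2 + (j : ZMod L) - (k : ZMod L))
        = η.2 + (k : ZMod L) - (j : ZMod L)
      ring
  · rintro ⟨u, ⟨k, hk, j, hj, rfl⟩, rfl⟩
    refine ⟨j, hj, k, hk, ?_⟩
    rw [Prod.ext_iff]
    refine ⟨?_, ?_⟩
    · show η.1 + (k : ZMod L) + (j : ZMod L) = η.1 + (j : ZMod L) + (k : ZMod L)
      ring
    · show η.2 + η.2 - (η.2 + (k : ZMod L) - (j : ZMod L))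
        = η.2 + (j : ZMod L) - (k : ZMod L)
      ring

private lemma extB_phi_sub (η : Site L) (A : Set (Site L)) :
    phi η '' extBoundary L A ⊆ extBoundary L (phi η '' A) := by
  rintro x ⟨y, ⟨hyA, w, hwA, hadj⟩, rfl⟩
  refine ⟨?_, phi η w, ⟨w, hwA, rfl⟩, adjacent_phi η hadj⟩
  rintro ⟨z, hz, hze⟩
  have hzy : z = y := (phi_invol η).injective hze
  exact hyA (hzy ▸ hz)

private lemma phi_image_image (η : Site L) (B : Set (Site L)) :
    phi η '' (phi η '' B) = B := by
  ext z
  constructor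
  · rintro ⟨y, ⟨u, hu, rfl⟩, rfl⟩
    rwa [phi_invol η u]
  · intro hz
    exact ⟨phi η z, ⟨z, hz, rfl⟩, phi_invol η z⟩

private lemma extB_phi (η : Site L) (A : Set (Site L)) :
    extBoundary L (phi η '' A) = phi η '' extBoundary L A := by
  apply Set.Subset.antisymm
  · intro x hx
    have h1 : phi η x ∈ extBoundary L A := by
      have h2 := extB_phi_sub η (phi η '' A) (Set.mem_image_of_mem _ hx)
      rwa [phi_image_image] at h2
    exact ⟨phi η x, h1, phi_invol η x⟩
  · exact extB_phi_sub η A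

private lemma rhombus_phi (η : Site L) (ℓ₁ ℓ₂ : ℕ) :
    rhombusND L η ℓ₂ ℓ₁ = phi η '' rhombusND L η ℓ₁ ℓ₂ := by
  unfold rhombusND
  rw [Set.image_union, ← extB_phi η (Sset L η ℓ₁ ℓ₂), ← Sset_phi η ℓ₁ ℓ₂]

end RhombusAux

/-- **Properties of rhombi, case `L/2 ≤ min ℓ₁ ℓ₂` and `max ℓ₁ ℓ₂ = L-1`:**
the complement of the odd rhombus `R_{ℓ₁,ℓ₂}(η)` consists exclusively of odd
sites, and contains exactly `L - min ℓ₁ ℓ₂` of them. -/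
theorem complement_of_rhombus_maximal (L : ℕ) (hL : Even L) (hL6 : 6 ≤ L)
    (η : Site L) (hη : η ∈ Vo L) (ℓ₁ ℓ₂ : ℕ)
    (hmin : L / 2 ≤ min ℓ₁ ℓ₂) (hmax : max ℓ₁ ℓ₂ = L - 1) :
    (rhombusND L η ℓ₁ ℓ₂)ᶜ ⊆ Vo L ∧
    ((rhombusND L η ℓ₁ ℓ₂)ᶜ).ncard = L - min ℓ₁ ℓ₂ := by
  have h2 : 2 ∣ L := hL.two_dvd
  haveI : NeZero L := ⟨by omega⟩
  rcases le_total ℓ₂ ℓ₁ with hle | hle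
  · have h1 : ℓ₁ = L - 1 := by rw [max_eq_left hle] at hmax; exact hmax
    have hmn : min ℓ₁ ℓ₂ = ℓ₂ := min_eq_right hle
    rw [hmn, h1]
    rw [hmn] at hmin
    exact core h2 hL6 hη hmin (by omega)
  · have h1 : ℓ₂ = L - 1 := by rw [max_eq_right hle] at hmax; exact hmax
    have hmn : min ℓ₁ ℓ₂ = ℓ₁ := min_eq_left hle
    rw [hmn, h1]
    rw [hmn] at hmin
    have hm2 : ℓ₁ ≤ L - 1 := by omega
    have hker := core h2 hL6 hη hmin hm2
    have hre : rhombusND L η ℓ₁ (L - 1) = phi η '' rhombusND L η (L - 1) ℓ₁ :=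
      rhombus_phi η (L - 1) ℓ₁
    rw [hre, ← Set.image_compl_eq (phi_invol η).bijective]
    refine ⟨?_, ?_⟩
    · rintro v ⟨y, hy, rfl⟩
      have hyo : y ∈ Vo L := hker.1 hy
      exact fun hc => hyo ((isEvenSite_phi h2 η y).mp hc)
    · rw [Set.ncard_image_of_injective _ (phi_invol η).injective]
      exact hker.2


end HardCoreGrid
end

section
/- Fix an even integer L ≥ 6, let Λ be the L×L toric grid graph, let η ∈ V_o and let ℓ₁, ℓ₂ be integers with max{ℓ₁,ℓ₂} = L and min{ℓ₁,ℓ₂} < L/2. Then the odd rhombus R_{ℓ₁,ℓ₂}(η) contains exactly L·min{ℓ₁,ℓ₂} odd sites and exactly L·(min{ℓ₁,ℓ₂}+1) even sites. -/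
namespace HardCoreGrid

section RhombusWindingAux

variable {L : ℕ}

private lemma val_mod_two' (hL : 2 ∣ L) (hpos : 0 < L) (x : ZMod L) :
    x.val % 2 = (ZMod.castHom hL (ZMod 2) x).val := by
  haveI : NeZero L := ⟨by omega⟩
  rw [ZMod.castHom_apply, ← ZMod.natCast_val, ZMod.val_natCast]

private lemma parity_shift' (hL : 2 ∣ L) (hpos : 0 < L) (x c : ZMod L) :
    (x + 2 * c).val % 2 = x.val % 2 := by
  rw [val_mod_two' hL hpos, val_mod_two' hL hpos x, map_add, map_mul]
  have h22 : ((2 : ZMod L)) = ((2 : ℕ) : ZMod L) := by push_cast; ring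
  have : (ZMod.castHom hL (ZMod 2)) 2 = 0 := by
    rw [h22, map_natCast]; decide
  rw [this, zero_mul, add_zero]

private lemma parity_add_one' (hL : 2 ∣ L) (hpos : 0 < L) (x : ZMod L) :
    ((x + 1).val % 2 = 0) ↔ ¬ (x.val % 2 = 0) := by
  have hv : ((ZMod.castHom hL (ZMod 2)) x).val < 2 := ZMod.val_lt _
  have hv2 : ((ZMod.castHom hL (ZMod 2)) x + 1).val
      = (((ZMod.castHom hL (ZMod 2)) x).val + (1 : ZMod 2).val) % 2 :=
    ZMod.val_add _ _
  have h1 : (1 : ZMod 2).val = 1 := rfl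
  rw [val_mod_two' hL hpos, val_mod_two' hL hpos x, map_add, map_one]
  omega

/-- The parametrisation of the union of `m` full odd diagonals. -/
private def fm (L : ℕ) (η : Site L) (m : ℕ) : ZMod L × Fin m → Site L :=
  fun p => (η.1 + p.1 + ((p.2 : ℕ) : ZMod L), η.2 + p.1 - ((p.2 : ℕ) : ZMod L))

private lemma fm_inj (hpos : 0 < L) {η : Site L} {m : ℕ} (hm : 2 * m ≤ L) :
    Function.Injective (fm L η m) := by
  haveI : NeZero L := ⟨by omega⟩
  rintro ⟨t, j⟩ ⟨t', j'⟩ h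
  simp only [fm, Prod.mk.injEq] at h
  obtain ⟨h1, h2⟩ := h
  have hj : ((2 * (j : ℕ) : ℕ) : ZMod L) = ((2 * (j' : ℕ) : ℕ) : ZMod L) := by
    push_cast
    linear_combination h1 - h2
  have hjv : 2 * (j : ℕ) = 2 * (j' : ℕ) := by
    have hj1 : (j : ℕ) < m := j.isLt
    have hj2 : (j' : ℕ) < m := j'.isLt
    have e1 : ((2 * (j : ℕ) : ℕ) : ZMod L).val = 2 * (j : ℕ) :=
      ZMod.val_cast_of_lt (by omega)
    have e2 : ((2 * (j' : ℕ) : ℕ) : ZMod L).val = 2 * (j' : ℕ) :=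
      ZMod.val_cast_of_lt (by omega)
    rw [← e1, ← e2, hj]
  have hje : (j : ℕ) = (j' : ℕ) := by omega
  have hjj : j = j' := Fin.ext hje
  subst hjj
  have ht : t = t' := by linear_combination h1
  rw [ht]

private lemma fm_card (hpos : 0 < L) {η : Site L} {m : ℕ} (hm : 2 * m ≤ L) :
    (Set.range (fm L η m)).ncard = L * m := by
  haveI : NeZero L := ⟨by omega⟩
  rw [← Set.image_univ, Set.ncard_image_of_injective _ (fm_inj hpos hm), Set.ncard_univ]
  simp [Nat.card_eq_fintype_card, ZMod.card]

private lemma sset_eq_range (hpos : 0 < L) (η : Site L) (m : ℕ) :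
    Sset L η L m = Set.range (fm L η m) := by
  haveI : NeZero L := ⟨by omega⟩
  ext v
  constructor
  · rintro ⟨k, hk, j, hj, rfl⟩
    exact ⟨((k : ZMod L), ⟨j, hj⟩), rfl⟩
  · rintro ⟨⟨t, j⟩, rfl⟩
    refine ⟨t.val, t.val_lt, (j : ℕ), j.isLt, ?_⟩
    simp [fm, ZMod.natCast_val, ZMod.cast_id]

private lemma fm_parity (hL : 2 ∣ L) (hpos : 0 < L) (η : Site L) (m : ℕ)
    (p : ZMod L × Fin m) :
    isEvenSite L (fm L η m p) ↔ isEvenSite L η := by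
  show ((η.1 + p.1 + _) + (η.2 + p.1 - _)).val % 2 = 0 ↔ (η.1 + η.2).val % 2 = 0
  have h : (η.1 + p.1 + ((p.2 : ℕ) : ZMod L)) + (η.2 + p.1 - ((p.2 : ℕ) : ZMod L))
      = (η.1 + η.2) + 2 * p.1 := by ring
  rw [h, parity_shift' hL hpos]

private lemma bd_eq_range (hL : 2 ∣ L) (hpos : 0 < L) {η : Site L}
    (hη : ¬ isEvenSite L η) {m : ℕ} (hm : 1 ≤ m) :
    extBoundary L (Set.range (fm L η m))
      = Set.range (fm L (η.1, η.2 + 1) (m + 1)) := by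
  have heta' : isEvenSite L (η.1, η.2 + 1) := by
    show (η.1 + (η.2 + 1)).val % 2 = 0
    rw [← add_assoc]
    exact (parity_add_one' hL hpos _).mpr hη
  ext v
  constructor
  · rintro ⟨-, w, ⟨⟨t, j⟩, rfl⟩, hadj⟩
    rcases hadj with ⟨h2, h1 | h1⟩ | ⟨h1, h2 | h2⟩
    · simp only [fm] at h1 h2
      refine ⟨(t, ⟨(j : ℕ) + 1, by omega⟩), Prod.ext ?_ ?_⟩
      · show η.1 + t + (((j : ℕ) + 1 : ℕ) : ZMod L) = v.1
        push_cast
        linear_combination -h1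
      · show η.2 + 1 + t - (((j : ℕ) + 1 : ℕ) : ZMod L) = v.2
        push_cast
        linear_combination -h2
    · simp only [fm] at h1 h2
      refine ⟨(t - 1, ⟨(j : ℕ), by omega⟩), Prod.ext ?_ ?_⟩
      · show η.1 + (t - 1) + (((j : ℕ) : ℕ) : ZMod L) = v.1
        push_cast
        linear_combination h1
      · show η.2 + 1 + (t - 1) - (((j : ℕ) : ℕ) : ZMod L) = v.2
        push_cast
        linear_combination -h2
    · simp only [fm] at h1 h2
      refine ⟨(t, ⟨(j : ℕ), by omega⟩), Prod.ext ?_ ?_⟩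
      · show η.1 + t + (((j : ℕ) : ℕ) : ZMod L) = v.1
        push_cast
        linear_combination -h1
      · show η.2 + 1 + t - (((j : ℕ) : ℕ) : ZMod L) = v.2
        push_cast
        linear_combination -h2
    · simp only [fm] at h1 h2
      refine ⟨(t - 1, ⟨(j : ℕ) + 1, by omega⟩), Prod.ext ?_ ?_⟩
      · show η.1 + (t - 1) + (((j : ℕ) + 1 : ℕ) : ZMod L) = v.1
        push_cast
        linear_combination -h1
      · show η.2 + 1 + (t - 1) - (((j : ℕ) + 1 : ℕ) : ZMod L) = v.2
        push_cast
        linear_combination h2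
  · rintro ⟨⟨t, j⟩, rfl⟩
    constructor
    · rintro ⟨q, hq⟩
      have h1 : isEvenSite L (fm L η m q) ↔ isEvenSite L η := fm_parity hL hpos η m q
      have h2 : isEvenSite L (fm L (η.1, η.2 + 1) (m + 1) (t, j))
          ↔ isEvenSite L (η.1, η.2 + 1) := fm_parity hL hpos _ _ _
      rw [hq] at h1
      exact hη (h1.mp (h2.mpr heta'))
    · by_cases hj : (j : ℕ) < m
      · refine ⟨fm L η m (t, ⟨(j : ℕ), hj⟩), ⟨_, rfl⟩, Or.inr ⟨rfl, Or.inl ?_⟩⟩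
        show η.2 + 1 + t - (((j : ℕ) : ℕ) : ZMod L)
          = η.2 + t - (((j : ℕ) : ℕ) : ZMod L) + 1
        ring
      · have hj1 : 1 ≤ (j : ℕ) := by omega
        have hsub : (((j : ℕ) - 1 : ℕ) : ZMod L) = ((j : ℕ) : ZMod L) - 1 := by
          rw [Nat.cast_sub hj1, Nat.cast_one]
        refine ⟨fm L η m (t + 1, ⟨(j : ℕ) - 1, by have := j.isLt; omega⟩),
          ⟨_, rfl⟩, Or.inr ⟨?_, Or.inr ?_⟩⟩
        · show η.1 + t + (((j : ℕ) : ℕ) : ZMod L)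
            = η.1 + (t + 1) + (((j : ℕ) - 1 : ℕ) : ZMod L)
          rw [hsub]; ring
        · show η.2 + (t + 1) - (((j : ℕ) - 1 : ℕ) : ZMod L)
            = η.2 + 1 + t - (((j : ℕ) : ℕ) : ZMod L) + 1
          rw [hsub]; ring

private lemma core_count (hL : Even L) (hL6 : 6 ≤ L) {η : Site L}
    (hη : η ∈ Vo L) {m : ℕ} (hm : 1 ≤ m) (hm2 : m < L / 2) :
    (rhombusND L η L m ∩ Vo L).ncard = L * m ∧
    (rhombusND L η L m ∩ Ve L).ncard = L * (m + 1) := by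
  have h2 : 2 ∣ L := hL.two_dvd
  have hL0 : L % 2 = 0 := by omega
  have hpos : 0 < L := by omega
  have hηo : ¬ isEvenSite L η := hη
  have heta' : isEvenSite L (η.1, η.2 + 1) := by
    show (η.1 + (η.2 + 1)).val % 2 = 0
    rw [← add_assoc]
    exact (parity_add_one' h2 hpos _).mpr hηo
  rw [rhombusND, sset_eq_range hpos, bd_eq_range h2 hpos hηo hm]
  constructor
  · have hset : (Set.range (fm L η m) ∪ Set.range (fm L (η.1, η.2 + 1) (m + 1))) ∩ Vo L
        = Set.range (fm L η m) := by
      ext v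
      constructor
      · rintro ⟨hv | hv, hvo⟩
        · exact hv
        · exfalso
          obtain ⟨p, rfl⟩ := hv
          exact hvo ((fm_parity h2 hpos _ _ p).mpr heta')
      · intro hv
        obtain ⟨p, rfl⟩ := hv
        exact ⟨Or.inl ⟨p, rfl⟩, fun hc => hηo ((fm_parity h2 hpos _ _ p).mp hc)⟩
    rw [hset, fm_card hpos (by omega)]
  · have hset : (Set.range (fm L η m) ∪ Set.range (fm L (η.1, η.2 + 1) (m + 1))) ∩ Ve L
        = Set.range (fm L (η.1, η.2 + 1) (m + 1)) := by
      ext v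
      constructor
      · rintro ⟨hv | hv, hve⟩
        · exfalso
          obtain ⟨p, rfl⟩ := hv
          exact hηo ((fm_parity h2 hpos _ _ p).mp hve)
        · exact hv
      · intro hv
        obtain ⟨p, rfl⟩ := hv
        exact ⟨Or.inr ⟨p, rfl⟩, (fm_parity h2 hpos _ _ p).mpr heta'⟩
    rw [hset, fm_card hpos (by omega)]

/-- The reflection `(a, b) ↦ (a, -b)`. -/
private def fl (L : ℕ) : Site L → Site L := fun v => (v.1, -v.2)

private lemma fl_fl (v : Site L) : fl L (fl L v) = v := by
  simp [fl]

private lemma fl_inj : Function.Injective (fl L) := by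
  intro a b h
  have := congrArg (fl L) h
  rwa [fl_fl, fl_fl] at this

private lemma fl_adj {v w : Site L} (h : adjacent L v w) :
    adjacent L (fl L v) (fl L w) := by
  rcases h with ⟨h2, h1⟩ | ⟨h1, h2 | h2⟩
  · exact Or.inl ⟨by simp [fl, h2], h1⟩
  · exact Or.inr ⟨h1, Or.inr (by show -w.2 = -v.2 + 1; rw [h2]; ring)⟩
  · exact Or.inr ⟨h1, Or.inl (by show -v.2 = -w.2 + 1; rw [h2]; ring)⟩

private lemma fl_even (h2 : 2 ∣ L) (hpos : 0 < L) (v : Site L) :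
    isEvenSite L (fl L v) ↔ isEvenSite L v := by
  show (v.1 + -v.2).val % 2 = 0 ↔ (v.1 + v.2).val % 2 = 0
  have h : v.1 + -v.2 = (v.1 + v.2) + 2 * (-v.2) := by ring
  rw [h, parity_shift' h2 hpos]

private lemma fl_sset (η : Site L) (l1 l2 : ℕ) :
    fl L '' Sset L η l1 l2 = Sset L (fl L η) l2 l1 := by
  ext v
  constructor
  · rintro ⟨w, ⟨k, hk, j, hj, rfl⟩, rfl⟩
    refine ⟨j, hj, k, hk, ?_⟩
    apply Prod.ext
    · show η.1 + _ + _ = (fl L η).1 + _ + _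
      simp only [fl]; ring
    · show -(η.2 + _ - _) = (fl L η).2 + _ - _
      simp only [fl]; ring
  · rintro ⟨k, hk, j, hj, rfl⟩
    refine ⟨(η.1 + (j : ZMod L) + (k : ZMod L), η.2 + (j : ZMod L) - (k : ZMod L)),
      ⟨j, hj, k, hk, rfl⟩, ?_⟩
    apply Prod.ext
    · show η.1 + _ + _ = (fl L η).1 + _ + _
      simp only [fl]; ring
    · show -(η.2 + _ - _) = (fl L η).2 + _ - _
      simp only [fl]; ring

private lemma fl_ext (A : Set (Site L)) :
    fl L '' extBoundary L A = extBoundary L (fl L '' A) := by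
  ext v
  constructor
  · rintro ⟨u, ⟨hu1, w, hw, hadj⟩, rfl⟩
    refine ⟨?_, fl L w, ⟨w, hw, rfl⟩, fl_adj hadj⟩
    rintro ⟨z, hz, hzeq⟩
    exact hu1 (fl_inj hzeq ▸ hz)
  · rintro ⟨hv1, w, ⟨u, hu, rfl⟩, hadj⟩
    refine ⟨fl L v, ⟨?_, u, hu, ?_⟩, fl_fl v⟩
    · intro hc
      exact hv1 ⟨fl L v, hc, fl_fl v⟩
    · have := fl_adj hadj
      rwa [fl_fl] at this

private lemma fl_rhomb (η : Site L) (l1 l2 : ℕ) :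
    fl L '' rhombusND L η l1 l2 = rhombusND L (fl L η) l2 l1 := by
  rw [rhombusND, rhombusND, Set.image_union, fl_sset, fl_ext, fl_sset]

private lemma fl_vo (h2 : 2 ∣ L) (hpos : 0 < L) :
    fl L '' Vo L = Vo L := by
  ext v
  constructor
  · rintro ⟨u, hu, rfl⟩
    exact fun hc => hu ((fl_even h2 hpos u).mp hc)
  · intro hv
    exact ⟨fl L v, fun hc => hv ((fl_even h2 hpos v).mp hc), fl_fl v⟩

private lemma fl_ve (h2 : 2 ∣ L) (hpos : 0 < L) :
    fl L '' Ve L = Ve L := by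
  ext v
  constructor
  · rintro ⟨u, hu, rfl⟩
    exact (fl_even h2 hpos u).mpr hu
  · intro hv
    exact ⟨fl L v, (fl_even h2 hpos v).mpr hv, fl_fl v⟩

end RhombusWindingAux

/-- **Properties of rhombi, case `max ℓ₁ ℓ₂ = L` and `min ℓ₁ ℓ₂ < L/2`:**
the odd rhombus `R_{ℓ₁,ℓ₂}(η)` contains exactly `L·min ℓ₁ ℓ₂` odd sites and
exactly `L·(min ℓ₁ ℓ₂ + 1)` even sites. -/
theorem rhombus_winding_site_count (L : ℕ) (hL : Even L) (hL6 : 6 ≤ L)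
    (η : Site L) (hη : η ∈ Vo L) (ℓ₁ ℓ₂ : ℕ) (hpos : 1 ≤ min ℓ₁ ℓ₂)
    (hmin : min ℓ₁ ℓ₂ < L / 2) (hmax : max ℓ₁ ℓ₂ = L) :
    (rhombusND L η ℓ₁ ℓ₂ ∩ Vo L).ncard = L * min ℓ₁ ℓ₂ ∧
    (rhombusND L η ℓ₁ ℓ₂ ∩ Ve L).ncard = L * (min ℓ₁ ℓ₂ + 1) := by
  have h2 : 2 ∣ L := hL.two_dvd
  have hL0 : L % 2 = 0 := by omega
  have hLpos : 0 < L := by omega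
  have h1L : ℓ₁ ≤ L := hmax ▸ le_max_left _ _
  have h2L : ℓ₂ ≤ L := hmax ▸ le_max_right _ _
  have hcases : ℓ₁ = L ∨ ℓ₂ = L := by
    rcases max_choice ℓ₁ ℓ₂ with h | h <;> omega
  rcases hcases with h | h
  · have hmin' : min ℓ₁ ℓ₂ = ℓ₂ := min_eq_right (h ▸ h2L)
    rw [hmin'] at hpos hmin ⊢
    rw [h]
    exact core_count hL hL6 hη hpos hmin
  · have hmin' : min ℓ₁ ℓ₂ = ℓ₁ := min_eq_left (h ▸ h1L)
    rw [hmin'] at hpos hmin ⊢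
    rw [h]
    have hηf : fl L η ∈ Vo L := fun hc => hη ((fl_even h2 hLpos η).mp hc)
    have key := core_count hL hL6 hηf hpos hmin
    have himo : fl L '' (rhombusND L η ℓ₁ L ∩ Vo L)
        = rhombusND L (fl L η) L ℓ₁ ∩ Vo L := by
      rw [Set.image_inter fl_inj, fl_rhomb, fl_vo h2 hLpos]
    have hime : fl L '' (rhombusND L η ℓ₁ L ∩ Ve L)
        = rhombusND L (fl L η) L ℓ₁ ∩ Ve L := by
      rw [Set.image_inter fl_inj, fl_rhomb, fl_ve h2 hLpos]
    constructor
    · rw [← key.1, ← himo, Set.ncard_image_of_injective _ fl_inj]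
    · rw [← key.2, ← hime, Set.ncard_image_of_injective _ fl_inj]


end HardCoreGrid
end

section
/- Fix an even integer L ≥ 6, let Λ be the L×L toric grid graph, let η ∈ V_o and let ℓ₁, ℓ₂ be integers with max{ℓ₁,ℓ₂} = L and min{ℓ₁,ℓ₂} ≥ L/2. Then the odd rhombus R_{ℓ₁,ℓ₂}(η) coincides with the whole vertex set V. -/
namespace HardCoreGrid

/-- **Properties of rhombi, case `max ℓ₁ ℓ₂ = L` and `min ℓ₁ ℓ₂ ≥ L/2`:**
the odd rhombus `R_{ℓ₁,ℓ₂}(η)` coincides with the whole vertex set. -/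
theorem rhombus_eq_univ (L : ℕ) (hL : Even L) (hL6 : 6 ≤ L)
    (η : Site L) (hη : η ∈ Vo L) (ℓ₁ ℓ₂ : ℕ)
    (hmin : L / 2 ≤ min ℓ₁ ℓ₂) (hmax : max ℓ₁ ℓ₂ = L) :
    rhombusND L η ℓ₁ ℓ₂ = Set.univ := by
  have hL0 : L ≠ 0 := by omega
  haveI : NeZero L := ⟨hL0⟩
  have hdvd : 2 ∣ L := hL.two_dvd
  obtain ⟨L2, hL2⟩ := hdvd
  have hpar : ∀ a b : ZMod L, (a + b).val % 2 = (a.val + b.val) % 2 := fun a b => by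
    rw [ZMod.val_add, Nat.mod_mod_of_dvd _ ⟨L2, hL2⟩]
  have hηp : (η.1 + η.2).val % 2 = 1 := by
    have h := hη
    simp only [Vo, isEvenSite, Set.mem_setOf_eq] at h
    omega
  have hH : ((L / 2 : ℕ) : ZMod L) + ((L / 2 : ℕ) : ZMod L) = 0 := by
    rw [← Nat.cast_add]
    have : L / 2 + L / 2 = L := by omega
    rw [this, ZMod.natCast_self]
  have hl1 : L / 2 ≤ ℓ₁ := le_trans hmin (min_le_left _ _)
  have hl2 : L / 2 ≤ ℓ₂ := le_trans hmin (min_le_right _ _)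
  have hcase : ℓ₁ = L ∨ ℓ₂ = L := by omega
  -- every odd site is in Sset
  have hmain : ∀ v : Site L, ¬ isEvenSite L v → v ∈ Sset L η ℓ₁ ℓ₂ := by
    intro v hv
    have hv1 : (v.1 + v.2).val % 2 = 1 := by
      simp only [isEvenSite] at hv
      omega
    obtain ⟨s, hs⟩ : ∃ s : ZMod L, s = (v.1 + v.2) - (η.1 + η.2) := ⟨_, rfl⟩
    obtain ⟨d, hd⟩ : ∃ d : ZMod L, d = (v.1 - v.2) - (η.1 - η.2) := ⟨_, rfl⟩
    have hspar : s.val % 2 = 0 := by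
      have h1 := hpar s (η.1 + η.2)
      have h2 : s + (η.1 + η.2) = v.1 + v.2 := by rw [hs]; ring
      rw [h2] at h1
      omega
    have hpar2 : ∀ a : ZMod L, (a + a).val % 2 = 0 := fun a => by
      have := hpar a a; omega
    have hdpar : d.val % 2 = 0 := by
      have h1 := hpar d ((v.2 - η.2) + (v.2 - η.2))
      have h2 : d + ((v.2 - η.2) + (v.2 - η.2)) = s := by rw [hs, hd]; ring
      rw [h2] at h1
      have h3 := hpar2 (v.2 - η.2)
      omega
    obtain ⟨a, ha⟩ : ∃ a : ℕ, a = s.val / 2 := ⟨_, rfl⟩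
    obtain ⟨b, hb⟩ : ∃ b : ℕ, b = d.val / 2 := ⟨_, rfl⟩
    have hsvlt := ZMod.val_lt s
    have hdvlt := ZMod.val_lt d
    have haL : a < L / 2 := by omega
    have hbL : b < L / 2 := by omega
    have hs' : (a : ZMod L) + (a : ZMod L) = (v.1 + v.2) - (η.1 + η.2) := by
      rw [← Nat.cast_add]
      have h1 : a + a = s.val := by omega
      rw [h1, ZMod.natCast_val, ZMod.cast_id]
      exact hs
    have hd' : (b : ZMod L) + (b : ZMod L) = (v.1 - v.2) - (η.1 - η.2) := by
      rw [← Nat.cast_add]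
      have h1 : b + b = d.val := by omega
      rw [h1, ZMod.natCast_val, ZMod.cast_id]
      exact hd
    obtain ⟨c, hc⟩ : ∃ c : ZMod L, c = ((a : ZMod L) + (b : ZMod L)) - (v.1 - η.1) := ⟨_, rfl⟩
    have hcc : c + c = 0 := by rw [hc]; linear_combination hs' + hd'
    have hc2 : (a : ZMod L) - (b : ZMod L) - (v.2 - η.2) = -c := by
      rw [hc]; linear_combination hs'
    have hhalf : c = 0 ∨ c = ((L / 2 : ℕ) : ZMod L) := by
      have hv0 : (c + c).val = 0 := by rw [hcc, ZMod.val_zero]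
      rw [ZMod.val_add] at hv0
      have hcl := ZMod.val_lt c
      have : L ∣ c.val + c.val := Nat.dvd_of_mod_eq_zero hv0
      obtain ⟨q, hq⟩ := this
      have hcval : c.val = 0 ∨ c.val = L / 2 := by
        rcases q with _ | _ | q
        · left; omega
        · right; omega
        · exfalso; nlinarith
      have hcv : ((c.val : ℕ) : ZMod L) = c := ZMod.natCast_rightInverse c
      rcases hcval with h | h
      · left
        rw [← hcv, h, Nat.cast_zero]
      · right
        rw [← hcv, h]
    rcases hhalf with h0 | hhc
    · refine ⟨a, by omega, b, by omega, ?_⟩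
      have e1 : v.1 = η.1 + (a : ZMod L) + (b : ZMod L) := by
        rw [h0] at hc; linear_combination hc
      have e2 : v.2 = η.2 + (a : ZMod L) - (b : ZMod L) := by
        rw [h0] at hc2; linear_combination -hc2
      exact Prod.ext e1 e2
    · rcases hcase with hℓ | hℓ
      · refine ⟨a + L / 2, by omega, b, by omega, ?_⟩
        have e1 : v.1 = η.1 + ((a + L / 2 : ℕ) : ZMod L) + (b : ZMod L) := by
          push_cast
          rw [hhc] at hc hc2
          linear_combination hc - hH
        have e2 : v.2 = η.2 + ((a + L / 2 : ℕ) : ZMod L) - (b : ZMod L) := by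
          push_cast
          rw [hhc] at hc hc2
          linear_combination -hc2
        exact Prod.ext e1 e2
      · refine ⟨a, by omega, b + L / 2, by omega, ?_⟩
        have e1 : v.1 = η.1 + (a : ZMod L) + ((b + L / 2 : ℕ) : ZMod L) := by
          push_cast
          rw [hhc] at hc hc2
          linear_combination hc - hH
        have e2 : v.2 = η.2 + (a : ZMod L) - ((b + L / 2 : ℕ) : ZMod L) := by
          push_cast
          rw [hhc] at hc hc2
          linear_combination -hc2 + hH
        exact Prod.ext e1 e2
  -- every member of Sset is odd
  have hSodd : ∀ v ∈ Sset L η ℓ₁ ℓ₂, ¬ isEvenSite L v := by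
    rintro v ⟨k, _, j, _, hvk⟩ hev
    have hsum : v.1 + v.2 = (η.1 + η.2) + ((k : ZMod L) + (k : ZMod L)) := by
      rw [hvk]; simp only; ring
    have h1 := hpar (η.1 + η.2) ((k : ZMod L) + (k : ZMod L))
    have h2 : ((k : ZMod L) + (k : ZMod L)).val % 2 = 0 := by
      have := hpar (k : ZMod L) (k : ZMod L); omega
    rw [← hsum] at h1
    simp only [isEvenSite] at hev
    omega
  ext v
  simp only [Set.mem_univ, iff_true, rhombusND, Set.mem_union]
  by_cases hv : isEvenSite L v
  · right
    refine ⟨fun hmem => hSodd v hmem hv, (v.1 + 1, v.2), ?_, ?_⟩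
    · apply hmain
      intro hev
      simp only [isEvenSite] at hv hev ⊢
      have h1 := hpar (v.1 + v.2) 1
      have h2 : (v.1 + 1 + v.2) = (v.1 + v.2) + 1 := by ring
      rw [h2] at hev
      have h3 : (1 : ZMod L).val = 1 := by
        rw [ZMod.val_one_eq_one_mod]
        exact Nat.mod_eq_of_lt (by omega)
      omega
    · exact Or.inl ⟨rfl, Or.inr rfl⟩
  · exact Or.inl (hmain v hv)

end HardCoreGrid
end

section
/- Fix an even integer L ≥ 6 and let Λ be the L×L toric grid graph. For any integers 0 ≤ ℓ₁, ℓ₂ ≤ L and any admissible reference site η, the perimeter of the rhombus R_{ℓ₁,ℓ₂}(η) is: 4(ℓ₁+ℓ₂+1) if min{ℓ₁,ℓ₂} < L/2 and max{ℓ₁,ℓ₂} < L; 4(2L−(ℓ₁+ℓ₂+1)) if min{ℓ₁,ℓ₂} ≥ L/2 and max{ℓ₁,ℓ₂} < L; 4L if min{ℓ₁,ℓ₂} < L/2 and max{ℓ₁,ℓ₂} = L; and 0 if min{ℓ₁,ℓ₂} ≥ L/2 and max{ℓ₁,ℓ₂} = L. -/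
namespace HardCoreGrid

/-- The rhombus `R_{ℓ₁,ℓ₂}(η)` for any `0 ≤ ℓ₁, ℓ₂ ≤ L`, including the
degenerate cases (where the reference site is even). -/
def rhombusFull (L : ℕ) (η : Site L) (ℓ₁ ℓ₂ : ℕ) : Set (Site L) :=
  if ℓ₁ = 0 ∧ ℓ₂ = 0 then {η}
  else if ℓ₂ = 0 then degRhombus10 L η ℓ₁
  else if ℓ₁ = 0 then degRhombus10 L η ℓ₂
  else rhombusND L η ℓ₁ ℓ₂

/-! ### Auxiliary development for the perimeter formula -/

section PerimeterAux

variable {L : ℕ}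

/-- Extract an integer shift from an equality of integer casts in `ZMod L`. -/
lemma int_shift {a b : ℤ} (h : (a : ZMod L) = (b : ZMod L)) : ∃ s : ℤ, b = a + L * s := by
  obtain ⟨s, hs⟩ := ((ZMod.intCast_eq_intCast_iff a b L).1 h).dvd
  exact ⟨s, by linarith⟩

/-- Shift the representative of a coordinate by a multiple of `L`. -/
lemma coord_shift {x η : ZMod L} {p r c : ℤ} (h : x = η + (p : ZMod L))
    (hrc : r = p + c * L) : x = η + (r : ZMod L) := by
  subst hrc
  rw [h]
  push_cast
  simp [ZMod.natCast_self]

/-- Canonical integer lift of the difference of two elements of `ZMod L`. -/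
lemma exists_coord_lift [NeZero L] (x η : ZMod L) :
    ∃ p : ℤ, 0 ≤ p ∧ p ≤ (L : ℤ) - 1 ∧ x = η + (p : ZMod L) := by
  refine ⟨((x - η).val : ℤ), by positivity, ?_, ?_⟩
  · have := ZMod.val_lt (x - η); omega
  · have h : (((x - η).val : ℕ) : ZMod L) = x - η := ZMod.natCast_rightInverse _
    push_cast
    rw [h]
    ring

lemma unit_bound {m A : ℤ} (hA : 0 < A) (h1 : -(2 * A) < m * A) (h2 : m * A < 2 * A) :
    m = -1 ∨ m = 0 ∨ m = 1 := by
  have hu : m < 2 := by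
    by_contra hctr
    push_neg at hctr
    have := mul_le_mul_of_nonneg_right hctr hA.le
    linarith
  have hl : -2 < m := by
    by_contra hctr
    push_neg at hctr
    have := mul_le_mul_of_nonneg_right hctr hA.le
    linarith
  omega

/-- The set of sites of `A` whose `d`-translate leaves `A`. -/
def Fset (L : ℕ) (d : Site L) (A : Set (Site L)) : Set (Site L) :=
  {v | v ∈ A ∧ v + d ∉ A}

/-- Integer-window description of a (generalized) rhombus. -/
def Box (L : ℕ) (η : Site L) (ℓ₁ ℓ₂ : ℕ) : Set (Site L) :=
  {v | ∃ p q : ℤ, v.1 = η.1 + (p : ZMod L) ∧ v.2 = η.2 + (q : ZMod L) ∧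
    -1 ≤ p + q ∧ p + q ≤ 2 * ℓ₁ - 1 ∧ -1 ≤ p - q ∧ p - q ≤ 2 * ℓ₂ - 1}

lemma adjacent_iff (v w : Site L) :
    adjacent L v w ↔ w = v + (1, 0) ∨ w = v + (-1, 0) ∨ w = v + (0, 1) ∨ w = v + (0, -1) := by
  constructor
  · rintro (⟨h2, h1 | h1⟩ | ⟨h1, h2 | h2⟩)
    · refine Or.inr (Or.inl ?_)
      ext
      · show w.1 = v.1 + (-1); linear_combination -h1
      · show w.2 = v.2 + 0; linear_combination -h2
    · refine Or.inl ?_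
      ext
      · show w.1 = v.1 + 1; linear_combination h1
      · show w.2 = v.2 + 0; linear_combination -h2
    · refine Or.inr (Or.inr (Or.inr ?_))
      ext
      · show w.1 = v.1 + 0; linear_combination -h1
      · show w.2 = v.2 + (-1); linear_combination -h2
    · refine Or.inr (Or.inr (Or.inl ?_))
      ext
      · show w.1 = v.1 + 0; linear_combination -h1
      · show w.2 = v.2 + 1; linear_combination h2
  · rintro (rfl | rfl | rfl | rfl)
    · exact Or.inl ⟨by show v.2 = v.2 + 0; ring, Or.inr (by show v.1 + 1 = v.1 + 1; ring)⟩
    · exact Or.inl ⟨by show v.2 = v.2 + 0; ring, Or.inl (by show v.1 = v.1 + (-1) + 1; ring)⟩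
    · exact Or.inr ⟨by show v.1 = v.1 + 0; ring, Or.inr (by show v.2 + 1 = v.2 + 1; ring)⟩
    · exact Or.inr ⟨by show v.1 = v.1 + 0; ring, Or.inl (by show v.2 = v.2 + (-1) + 1; ring)⟩

lemma adjacent_symm {v w : Site L} (h : adjacent L v w) : adjacent L w v := by
  rcases h with ⟨h1, h2⟩ | ⟨h1, h2⟩
  · exact Or.inl ⟨h1.symm, h2.symm⟩
  · exact Or.inr ⟨h1.symm, h2.symm⟩

lemma img_disj {d d' : Site L} (h : d ≠ d') (S T : Set (Site L)) :
    Disjoint ((fun v => (v, v + d)) '' S) ((fun v => (v, v + d')) '' T) := by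
  rw [Set.disjoint_left]
  rintro ⟨a, b⟩ ⟨u, _, heq⟩ ⟨u', _, heq'⟩
  injection heq with e1 f1
  injection heq' with e2 f2
  subst e1
  subst e2
  exact h (add_left_cancel (f1.trans f2.symm))

lemma one_ne_neg_one (hL6 : 6 ≤ L) : (1 : ZMod L) ≠ -1 := by
  haveI : NeZero L := ⟨by omega⟩
  intro h
  have h2 : ((2 : ℕ) : ZMod L) = 0 := by push_cast; linear_combination h
  rw [ZMod.natCast_eq_zero_iff] at h2
  have := Nat.le_of_dvd (by norm_num) h2
  omega

lemma one_ne_zero' (hL6 : 6 ≤ L) : (1 : ZMod L) ≠ 0 := by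
  haveI : Fact (1 < L) := ⟨by omega⟩
  exact one_ne_zero

lemma boundaryPairs_eq (hL6 : 6 ≤ L) (A : Set (Site L)) :
    boundaryPairs L A =
      (fun v => (v, v + ((1, 0) : Site L))) '' Fset L (1, 0) A ∪
      ((fun v => (v, v + ((-1, 0) : Site L))) '' Fset L (-1, 0) A ∪
      ((fun v => (v, v + ((0, 1) : Site L))) '' Fset L (0, 1) A ∪
       (fun v => (v, v + ((0, -1) : Site L))) '' Fset L (0, -1) A)) := by
  ext ⟨v, w⟩
  simp only [boundaryPairs, Set.mem_setOf_eq, Set.mem_union, Set.mem_image, Fset, Prod.mk.injEq]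
  constructor
  · rintro ⟨hv, hw, hadj⟩
    rcases (adjacent_iff v w).1 hadj with rfl | rfl | rfl | rfl
    · exact Or.inl ⟨v, ⟨hv, hw⟩, rfl, rfl⟩
    · exact Or.inr (Or.inl ⟨v, ⟨hv, hw⟩, rfl, rfl⟩)
    · exact Or.inr (Or.inr (Or.inl ⟨v, ⟨hv, hw⟩, rfl, rfl⟩))
    · exact Or.inr (Or.inr (Or.inr ⟨v, ⟨hv, hw⟩, rfl, rfl⟩))
  · rintro (⟨u, ⟨hu, hud⟩, rfl, rfl⟩ | ⟨u, ⟨hu, hud⟩, rfl, rfl⟩ |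
      ⟨u, ⟨hu, hud⟩, rfl, rfl⟩ | ⟨u, ⟨hu, hud⟩, rfl, rfl⟩) <;>
    exact ⟨hu, hud, (adjacent_iff _ _).2 (by tauto)⟩

lemma perimeter_eq_sum (hL6 : 6 ≤ L) (A : Set (Site L)) :
    perimeter L A = (Fset L (1, 0) A).ncard + (Fset L (-1, 0) A).ncard +
      (Fset L (0, 1) A).ncard + (Fset L (0, -1) A).ncard := by
  haveI : NeZero L := ⟨by omega⟩
  have hne1 : ((1, 0) : Site L) ≠ (-1, 0) := by
    intro h; exact one_ne_neg_one hL6 (congrArg Prod.fst h)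
  have hne2 : ((1, 0) : Site L) ≠ (0, 1) := by
    intro h; exact one_ne_zero' hL6 (congrArg Prod.fst h)
  have hne3 : ((1, 0) : Site L) ≠ (0, -1) := by
    intro h; exact one_ne_zero' hL6 (congrArg Prod.fst h)
  have hne4 : ((-1, 0) : Site L) ≠ (0, 1) := by
    intro h
    have := congrArg Prod.fst h
    simp only [neg_eq_zero] at this
    exact one_ne_zero' hL6 this
  have hne5 : ((-1, 0) : Site L) ≠ (0, -1) := by
    intro h
    have := congrArg Prod.fst h
    simp only [neg_eq_zero] at this
    exact one_ne_zero' hL6 this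
  have hne6 : ((0, 1) : Site L) ≠ (0, -1) := by
    intro h; exact one_ne_neg_one hL6 (congrArg Prod.snd h)
  have hinj : ∀ d : Site L, Function.Injective (fun v : Site L => (v, v + d)) := by
    intro d a b h
    exact congrArg Prod.fst h
  rw [perimeter, boundaryPairs_eq hL6 A]
  rw [Set.ncard_union_eq (by
        refine Set.disjoint_union_right.2 ⟨img_disj hne1 _ _, ?_⟩
        exact Set.disjoint_union_right.2 ⟨img_disj hne2 _ _, img_disj hne3 _ _⟩)
      (Set.toFinite _) (Set.toFinite _)]
  rw [Set.ncard_union_eq (by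
        exact Set.disjoint_union_right.2 ⟨img_disj hne4 _ _, img_disj hne5 _ _⟩)
      (Set.toFinite _) (Set.toFinite _)]
  rw [Set.ncard_union_eq (img_disj hne6 _ _) (Set.toFinite _) (Set.toFinite _)]
  rw [Set.ncard_image_of_injective _ (hinj _), Set.ncard_image_of_injective _ (hinj _),
    Set.ncard_image_of_injective _ (hinj _), Set.ncard_image_of_injective _ (hinj _)]
  ring

lemma ncard_Fset_neg [NeZero L] (d : Site L) (A : Set (Site L)) :
    (Fset L (-d) A).ncard = (Fset L d A).ncard := by
  classical
  set T : Set (Site L) := (fun v => v + d) ⁻¹' A with hT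
  have hTcard : T.ncard = A.ncard := by
    have himg : T = (fun v => v + (-d)) '' A := by
      ext v
      simp only [hT, Set.mem_preimage, Set.mem_image]
      constructor
      · intro h; exact ⟨v + d, h, by abel⟩
      · rintro ⟨a, ha, rfl⟩
        simpa [add_assoc] using ha
    rw [himg, Set.ncard_image_of_injective _ (add_left_injective _)]
  have h1 : Fset L d A = A \ T := by
    ext v; simp [Fset, hT]
  have h2 : Fset L (-d) A = (fun v => v + d) '' (T \ A) := by
    ext v
    simp only [Fset, Set.mem_setOf_eq, Set.mem_image, Set.mem_diff, hT, Set.mem_preimage]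
    constructor
    · rintro ⟨hv, hvd⟩
      exact ⟨v + -d, ⟨by simpa [add_assoc] using hv, hvd⟩, by abel⟩
    · rintro ⟨u, ⟨huT, huA⟩, rfl⟩
      refine ⟨huT, by simpa [add_assoc] using huA⟩
  rw [h1, h2, Set.ncard_image_of_injective _ (add_left_injective _)]
  have e1 : A \ T = A \ (A ∩ T) := Set.diff_self_inter.symm
  have e2 : T \ A = T \ (A ∩ T) := Set.diff_inter_self_eq_diff.symm
  rw [e1, e2, Set.ncard_diff Set.inter_subset_left (Set.toFinite _),
    Set.ncard_diff Set.inter_subset_right (Set.toFinite _), hTcard]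

lemma ncard_Fset_psi [NeZero L] (s : ZMod L) (A : Set (Site L))
    (hA : ∀ v : Site L, v ∈ A ↔ ((s - v.2, s - v.1) : Site L) ∈ A) (d : Site L) :
    (Fset L (-d.2, -d.1) A).ncard = (Fset L d A).ncard := by
  set ψ : Site L → Site L := fun v => (s - v.2, s - v.1) with hψ
  have hinv : Function.Involutive ψ := by
    intro v
    simp [hψ, Prod.ext_iff, sub_sub_cancel]
  have hpls : ∀ (v e : Site L), ψ v + (-e.2, -e.1) = ψ (v + e) := by
    intro v e
    simp [hψ, Prod.ext_iff]
    constructor <;> ring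
  have himg : Fset L (-d.2, -d.1) A = ψ '' Fset L d A := by
    ext v
    simp only [Set.mem_image, Fset, Set.mem_setOf_eq]
    constructor
    · rintro ⟨hv, hvd⟩
      refine ⟨ψ v, ⟨(hA v).1 hv, ?_⟩, hinv v⟩
      intro hc
      apply hvd
      apply (hA (v + ((-d.2, -d.1) : Site L))).2
      show ψ (v + ((-d.2, -d.1) : Site L)) ∈ A
      rw [← hpls v ((-d.2, -d.1) : Site L)]
      simpa using hc
    · rintro ⟨u, ⟨hu, hud⟩, rfl⟩
      refine ⟨(hA u).1 hu, ?_⟩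
      intro hc
      apply hud
      rw [hpls u d] at hc
      exact (hA (u + d)).2 hc
  rw [himg, Set.ncard_image_of_injective _ hinv.injective]

lemma perimeter_eq_four_mul (hL6 : 6 ≤ L) (A : Set (Site L)) (s : ZMod L)
    (hA : ∀ v : Site L, v ∈ A ↔ ((s - v.2, s - v.1) : Site L) ∈ A) :
    perimeter L A = 4 * (Fset L (1, 0) A).ncard := by
  haveI : NeZero L := ⟨by omega⟩
  have h1 : (Fset L (-1, 0) A).ncard = (Fset L (1, 0) A).ncard := by
    have := ncard_Fset_neg ((1, 0) : Site L) A
    simpa using this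
  have h2 : (Fset L (0, 1) A).ncard = (Fset L (1, 0) A).ncard := by
    have hp := ncard_Fset_psi s A hA ((0, 1) : Site L)
    simp only at hp
    rw [show ((-(1 : ZMod L), -(0 : ZMod L)) : Site L) = ((-1, 0) : Site L) by simp] at hp
    rw [← hp, h1]
  have h3 : (Fset L (0, -1) A).ncard = (Fset L (1, 0) A).ncard := by
    have hp := ncard_Fset_psi s A hA ((0, -1) : Site L)
    simp only at hp
    rw [show ((-(-1 : ZMod L), -(0 : ZMod L)) : Site L) = ((1, 0) : Site L) by simp] at hp
    exact hp.symm
  rw [perimeter_eq_sum hL6 A, h1, h2, h3]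
  ring

lemma LS_cases {s B : ℤ} (hL0 : (0:ℤ) < (L:ℤ)) (h : (L:ℤ) * s = B)
    (h1 : -(2 * (L:ℤ)) < B) (h2 : B < 2 * (L:ℤ)) : s = -1 ∨ s = 0 ∨ s = 1 := by
  refine unit_bound hL0 ?_ ?_
  · rw [mul_comm s (L:ℤ), h]; linarith
  · rw [mul_comm s (L:ℤ), h]; linarith

lemma Box_mem_psi (η : Site L) (ℓ₁ ℓ₂ : ℕ) :
    ∀ v : Site L, v ∈ Box L η ℓ₁ ℓ₂ ↔
      (((η.1 + η.2 + (ℓ₁ : ZMod L) - 1) - v.2, (η.1 + η.2 + (ℓ₁ : ZMod L) - 1) - v.1) : Site L)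
        ∈ Box L η ℓ₁ ℓ₂ := by
  have key : ∀ v : Site L, v ∈ Box L η ℓ₁ ℓ₂ →
      (((η.1 + η.2 + (ℓ₁ : ZMod L) - 1) - v.2, (η.1 + η.2 + (ℓ₁ : ZMod L) - 1) - v.1) : Site L)
        ∈ Box L η ℓ₁ ℓ₂ := by
    rintro v ⟨p, q, h1, h2, w1, w2, w3, w4⟩
    refine ⟨(ℓ₁ : ℤ) - 1 - q, (ℓ₁ : ℤ) - 1 - p, ?_, ?_, by omega, by omega, by omega, by omega⟩
    · show η.1 + η.2 + (ℓ₁ : ZMod L) - 1 - v.2 = η.1 + (((ℓ₁ : ℤ) - 1 - q : ℤ) : ZMod L)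
      rw [h2]; push_cast; ring
    · show η.1 + η.2 + (ℓ₁ : ZMod L) - 1 - v.1 = η.2 + (((ℓ₁ : ℤ) - 1 - p : ℤ) : ZMod L)
      rw [h1]; push_cast; ring
  intro v
  refine ⟨key v, fun h => ?_⟩
  have h2 := key _ h
  simpa [sub_sub_cancel] using h2

lemma rhombusND_eq_Box (η : Site L) (ℓ₁ ℓ₂ : ℕ) (h1 : 1 ≤ ℓ₁) (h2 : 1 ≤ ℓ₂) :
    rhombusND L η ℓ₁ ℓ₂ = Box L η ℓ₁ ℓ₂ := by
  have hSmem : ∀ (k j : ℕ), k < ℓ₁ → j < ℓ₂ →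
      ((η.1 + (k : ZMod L) + (j : ZMod L), η.2 + (k : ZMod L) - (j : ZMod L)) : Site L) ∈
        Sset L η ℓ₁ ℓ₂ := fun k j hk hj => ⟨k, hk, j, hj, rfl⟩
  apply Set.Subset.antisymm
  · rintro v (⟨k, hk, j, hj, rfl⟩ | ⟨hvn, w, ⟨k, hk, j, hj, rfl⟩, hadj⟩)
    · refine ⟨(k : ℤ) + j, (k : ℤ) - j, ?_, ?_, by omega, by omega, by omega, by omega⟩
      · show η.1 + (k : ZMod L) + (j : ZMod L) = η.1 + (((k : ℤ) + j : ℤ) : ZMod L)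
        push_cast; ring
      · show η.2 + (k : ZMod L) - (j : ZMod L) = η.2 + (((k : ℤ) - j : ℤ) : ZMod L)
        push_cast; ring
    · rcases (adjacent_iff v _).1 hadj with hw | hw | hw | hw
      · -- w = v + (1,0) : v = w - (1,0)
        have c1 := congrArg Prod.fst hw
        have c2 := congrArg Prod.snd hw
        simp only [Prod.fst_add, Prod.snd_add] at c1 c2
        norm_num at c1 c2
        refine ⟨(k : ℤ) + j - 1, (k : ℤ) - j, ?_, ?_, by omega, by omega, by omega, by omega⟩
        · show v.1 = η.1 + (((k : ℤ) + j - 1 : ℤ) : ZMod L)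
          push_cast at c1 ⊢; linear_combination -c1
        · show v.2 = η.2 + (((k : ℤ) - j : ℤ) : ZMod L)
          push_cast at c2 ⊢; linear_combination -c2
      · -- w = v + (-1,0)
        have c1 := congrArg Prod.fst hw
        have c2 := congrArg Prod.snd hw
        simp only [Prod.fst_add, Prod.snd_add] at c1 c2
        norm_num at c1 c2
        refine ⟨(k : ℤ) + j + 1, (k : ℤ) - j, ?_, ?_, by omega, by omega, by omega, by omega⟩
        · show v.1 = η.1 + (((k : ℤ) + j + 1 : ℤ) : ZMod L)
          push_cast at c1 ⊢; linear_combination -c1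
        · show v.2 = η.2 + (((k : ℤ) - j : ℤ) : ZMod L)
          push_cast at c2 ⊢; linear_combination -c2
      · -- w = v + (0,1)
        have c1 := congrArg Prod.fst hw
        have c2 := congrArg Prod.snd hw
        simp only [Prod.fst_add, Prod.snd_add] at c1 c2
        norm_num at c1 c2
        refine ⟨(k : ℤ) + j, (k : ℤ) - j - 1, ?_, ?_, by omega, by omega, by omega, by omega⟩
        · show v.1 = η.1 + (((k : ℤ) + j : ℤ) : ZMod L)
          push_cast at c1 ⊢; linear_combination -c1
        · show v.2 = η.2 + (((k : ℤ) - j - 1 : ℤ) : ZMod L)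
          push_cast at c2 ⊢; linear_combination -c2
      · -- w = v + (0,-1)
        have c1 := congrArg Prod.fst hw
        have c2 := congrArg Prod.snd hw
        simp only [Prod.fst_add, Prod.snd_add] at c1 c2
        norm_num at c1 c2
        refine ⟨(k : ℤ) + j, (k : ℤ) - j + 1, ?_, ?_, by omega, by omega, by omega, by omega⟩
        · show v.1 = η.1 + (((k : ℤ) + j : ℤ) : ZMod L)
          push_cast at c1 ⊢; linear_combination -c1
        · show v.2 = η.2 + (((k : ℤ) - j + 1 : ℤ) : ZMod L)
          push_cast at c2 ⊢; linear_combination -c2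
  · rintro v ⟨p, q, hv1, hv2, w1, w2, w3, w4⟩
    have hSv : (p + q) % 2 = 0 → v ∈ Sset L η ℓ₁ ℓ₂ := by
      intro hev
      obtain ⟨k, hk⟩ : ∃ k : ℕ, (k : ℤ) = (p + q) / 2 :=
        ⟨((p + q) / 2).toNat, Int.toNat_of_nonneg (by omega)⟩
      obtain ⟨j, hj⟩ : ∃ j : ℕ, (j : ℤ) = (p - q) / 2 :=
        ⟨((p - q) / 2).toNat, Int.toNat_of_nonneg (by omega)⟩
      refine ⟨k, by omega, j, by omega, ?_⟩
      have hp : p = (k : ℤ) + j := by omega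
      have hq : q = (k : ℤ) - j := by omega
      ext
      · show v.1 = η.1 + (k : ZMod L) + j
        rw [hv1, hp]; push_cast; ring
      · show v.2 = η.2 + (k : ZMod L) - j
        rw [hv2, hq]; push_cast; ring
    by_cases hvS : v ∈ Sset L η ℓ₁ ℓ₂
    · exact Or.inl hvS
    by_cases hev : (p + q) % 2 = 0
    · exact Or.inl (hSv hev)
    right
    have hA : p + q = -1 ∨ 1 ≤ p + q := by omega
    have hB : p - q = -1 ∨ 1 ≤ p - q := by omega
    rcases hA with hA | hA
    · rcases hB with hB | hB
      · -- k = j = 0, w = v + (1,0)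
        refine ⟨hvS, _, hSmem 0 0 (by omega) (by omega), (adjacent_iff v _).2 (Or.inl ?_)⟩
        ext
        · show η.1 + ((0:ℕ) : ZMod L) + ((0:ℕ) : ZMod L) = v.1 + 1
          rw [hv1]
          have hint : (0 : ℤ) = p + 1 := by omega
          have c := congrArg (fun z : ℤ => (z : ZMod L)) hint
          push_cast at c ⊢
          linear_combination c
        · show η.2 + ((0:ℕ) : ZMod L) - ((0:ℕ) : ZMod L) = v.2 + 0
          rw [hv2]
          have hint : (0 : ℤ) = q := by omega
          have c := congrArg (fun z : ℤ => (z : ZMod L)) hint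
          push_cast at c ⊢
          linear_combination c
      · -- a = -1, b ≥ 1: k = 0, j = (b-1)/2, w = v + (0,1)
        obtain ⟨j, hj⟩ : ∃ j : ℕ, (j : ℤ) = (p - q - 1) / 2 :=
          ⟨((p - q - 1) / 2).toNat, Int.toNat_of_nonneg (by omega)⟩
        refine ⟨hvS, _, hSmem 0 j (by omega) (by omega),
          (adjacent_iff v _).2 (Or.inr (Or.inr (Or.inl ?_)))⟩
        ext
        · show η.1 + ((0:ℕ) : ZMod L) + (j : ZMod L) = v.1 + 0
          rw [hv1]
          have hint : (0 : ℤ) + (j : ℤ) = p := by omega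
          have c := congrArg (fun z : ℤ => (z : ZMod L)) hint
          push_cast at c ⊢
          linear_combination c
        · show η.2 + ((0:ℕ) : ZMod L) - (j : ZMod L) = v.2 + 1
          rw [hv2]
          have hint : (0 : ℤ) - (j : ℤ) = q + 1 := by omega
          have c := congrArg (fun z : ℤ => (z : ZMod L)) hint
          push_cast at c ⊢
          linear_combination c
    · rcases hB with hB | hB
      · -- a ≥ 1, b = -1: k = (a-1)/2, j = 0, w = v + (0,-1)
        obtain ⟨k, hk⟩ : ∃ k : ℕ, (k : ℤ) = (p + q - 1) / 2 :=
          ⟨((p + q - 1) / 2).toNat, Int.toNat_of_nonneg (by omega)⟩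
        refine ⟨hvS, _, hSmem k 0 (by omega) (by omega),
          (adjacent_iff v _).2 (Or.inr (Or.inr (Or.inr ?_)))⟩
        ext
        · show η.1 + (k : ZMod L) + ((0:ℕ) : ZMod L) = v.1 + 0
          rw [hv1]
          have hint : (k : ℤ) + 0 = p := by omega
          have c := congrArg (fun z : ℤ => (z : ZMod L)) hint
          push_cast at c ⊢
          linear_combination c
        · show η.2 + (k : ZMod L) - ((0:ℕ) : ZMod L) = v.2 + (-1)
          rw [hv2]
          have hint : (k : ℤ) - 0 = q - 1 := by omega
          have c := congrArg (fun z : ℤ => (z : ZMod L)) hint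
          push_cast at c ⊢
          linear_combination c
      · -- a ≥ 1, b ≥ 1: k = (a-1)/2, j = (b-1)/2, w = v + (-1,0)
        obtain ⟨k, hk⟩ : ∃ k : ℕ, (k : ℤ) = (p + q - 1) / 2 :=
          ⟨((p + q - 1) / 2).toNat, Int.toNat_of_nonneg (by omega)⟩
        obtain ⟨j, hj⟩ : ∃ j : ℕ, (j : ℤ) = (p - q - 1) / 2 :=
          ⟨((p - q - 1) / 2).toNat, Int.toNat_of_nonneg (by omega)⟩
        refine ⟨hvS, _, hSmem k j (by omega) (by omega),
          (adjacent_iff v _).2 (Or.inr (Or.inl ?_))⟩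
        ext
        · show η.1 + (k : ZMod L) + (j : ZMod L) = v.1 + (-1)
          rw [hv1]
          have hint : (k : ℤ) + (j : ℤ) = p - 1 := by omega
          have c := congrArg (fun z : ℤ => (z : ZMod L)) hint
          push_cast at c ⊢
          linear_combination c
        · show η.2 + (k : ZMod L) - (j : ZMod L) = v.2 + 0
          rw [hv2]
          have hint : (k : ℤ) - (j : ℤ) = q := by omega
          have c := congrArg (fun z : ℤ => (z : ZMod L)) hint
          push_cast at c ⊢
          linear_combination c

lemma Fset_Box_eq (hL6 : 6 ≤ L) (η : Site L) (ℓ₁ ℓ₂ : ℕ)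
    (hord : ℓ₂ ≤ ℓ₁) (hub : ℓ₁ ≤ L - 1) (hsm : 2 * ℓ₂ + 2 ≤ L) :
    Fset L (1, 0) (Box L η ℓ₁ ℓ₂) =
      (fun q : ℤ => ((η.1 + ((min (q + 2 * (ℓ₂:ℤ) - 1) (2 * (ℓ₁:ℤ) - 1 - q) : ℤ) : ZMod L),
        η.2 + (q : ZMod L)) : Site L)) '' Set.Icc (-(ℓ₂ : ℤ)) (ℓ₁ : ℤ) := by
  have hL0 : (0:ℤ) < (L:ℤ) := by omega
  apply Set.Subset.antisymm
  · rintro u ⟨⟨p, q, hv1, hv2, w1, w2, w3, w4⟩, hnot⟩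
    have hm1 := min_le_left (q + 2 * (ℓ₂:ℤ) - 1) (2 * (ℓ₁:ℤ) - 1 - q)
    have hm2 := min_le_right (q + 2 * (ℓ₂:ℤ) - 1) (2 * (ℓ₁:ℤ) - 1 - q)
    have hple : p ≤ min (q + 2 * (ℓ₂:ℤ) - 1) (2 * (ℓ₁:ℤ) - 1 - q) := le_min (by omega) (by omega)
    have hpeq : p = min (q + 2 * (ℓ₂:ℤ) - 1) (2 * (ℓ₁:ℤ) - 1 - q) := by
      rcases eq_or_lt_of_le hple with h | h
      · exact h
      exfalso
      apply hnot
      refine ⟨p + 1, q, ?_, ?_, by omega, by omega, by omega, by omega⟩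
      · show u.1 + 1 = η.1 + ((p + 1 : ℤ) : ZMod L)
        rw [hv1]; push_cast; ring
      · show u.2 + 0 = η.2 + (q : ZMod L)
        rw [hv2]; ring
    refine ⟨q, ⟨by omega, by omega⟩, ?_⟩
    ext
    · show η.1 + _ = u.1
      rw [hv1, hpeq]
    · show η.2 + _ = u.2
      rw [hv2]
  · rintro u ⟨q, ⟨hq1, hq2⟩, rfl⟩
    have hm1 := min_le_left (q + 2 * (ℓ₂:ℤ) - 1) (2 * (ℓ₁:ℤ) - 1 - q)
    have hm2 := min_le_right (q + 2 * (ℓ₂:ℤ) - 1) (2 * (ℓ₁:ℤ) - 1 - q)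
    have hm3 := min_choice (q + 2 * (ℓ₂:ℤ) - 1) (2 * (ℓ₁:ℤ) - 1 - q)
    constructor
    · refine ⟨min (q + 2 * (ℓ₂:ℤ) - 1) (2 * (ℓ₁:ℤ) - 1 - q), q, rfl, rfl, ?_, ?_, ?_, ?_⟩ <;>
        (rcases hm3 with h | h <;> rw [h] <;> omega)
    · rintro ⟨p₂, q₂, h1, h2, u1, u2, u3, u4⟩
      have e0 : η.1 + ((min (q + 2 * (ℓ₂:ℤ) - 1) (2 * (ℓ₁:ℤ) - 1 - q) : ℤ) : ZMod L) + 1 =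
          η.1 + (p₂ : ZMod L) := h1
      have e1 : ((min (q + 2 * (ℓ₂:ℤ) - 1) (2 * (ℓ₁:ℤ) - 1 - q) + 1 : ℤ) : ZMod L) =
          (p₂ : ZMod L) := by
        push_cast at e0 ⊢
        linear_combination e0
      have e0' : η.2 + (q : ZMod L) + 0 = η.2 + (q₂ : ZMod L) := h2
      have e2 : ((q : ℤ) : ZMod L) = (q₂ : ZMod L) := by
        push_cast at e0' ⊢
        linear_combination e0'
      obtain ⟨s, hs⟩ := int_shift e1
      obtain ⟨t, ht⟩ := int_shift e2
      rcases hm3 with h | h <;> rw [h] at hs hm1 hm2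
      · have hvs : (L:ℤ) * s = p₂ - (q + 2 * (ℓ₂:ℤ)) := by linear_combination -hs
        have hvt : (L:ℤ) * t = q₂ - q := by linear_combination -ht
        have hbs := LS_cases hL0 hvs (by omega) (by omega)
        have hbt := LS_cases hL0 hvt (by omega) (by omega)
        rcases hbs with rfl | rfl | rfl <;> rcases hbt with rfl | rfl | rfl <;> omega
      · have hvs : (L:ℤ) * s = p₂ - (2 * (ℓ₁:ℤ) - q) := by linear_combination -hs
        have hvt : (L:ℤ) * t = q₂ - q := by linear_combination -ht
        have hbs := LS_cases hL0 hvs (by omega) (by omega)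
        have hbt := LS_cases hL0 hvt (by omega) (by omega)
        rcases hbs with rfl | rfl | rfl <;> rcases hbt with rfl | rfl | rfl <;> omega

lemma Box_perim_case1 (hL6 : 6 ≤ L) (η : Site L) (ℓ₁ ℓ₂ : ℕ)
    (hord : ℓ₂ ≤ ℓ₁) (hub : ℓ₁ ≤ L - 1) (hsm : 2 * ℓ₂ + 2 ≤ L) :
    perimeter L (Box L η ℓ₁ ℓ₂) = 4 * (ℓ₁ + ℓ₂ + 1) := by
  haveI : NeZero L := ⟨by omega⟩
  have hL0 : (0:ℤ) < (L:ℤ) := by omega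
  have hinjon : Set.InjOn
      (fun q : ℤ => ((η.1 + ((min (q + 2 * (ℓ₂:ℤ) - 1) (2 * (ℓ₁:ℤ) - 1 - q) : ℤ) : ZMod L),
        η.2 + (q : ZMod L)) : Site L)) (Set.Icc (-(ℓ₂ : ℤ)) (ℓ₁ : ℤ)) := by
    intro q hq q' hq' heq
    simp only [Set.mem_Icc] at hq hq'
    have h2 := congrArg Prod.snd heq
    simp only at h2
    have e2 := add_left_cancel h2
    obtain ⟨t, ht⟩ := int_shift e2
    have h1 := congrArg Prod.fst heq
    simp only at h1
    have e1 := add_left_cancel h1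
    obtain ⟨s, hsf⟩ := int_shift e1
    have hvt : (L:ℤ) * t = q' - q := by linear_combination -ht
    have hbt := LS_cases hL0 hvt (by omega) (by omega)
    rcases min_cases (q + 2 * (ℓ₂:ℤ) - 1) (2 * (ℓ₁:ℤ) - 1 - q) with ⟨hma, hmb⟩ | ⟨hma, hmb⟩ <;>
      rcases min_cases (q' + 2 * (ℓ₂:ℤ) - 1) (2 * (ℓ₁:ℤ) - 1 - q') with ⟨hma', hmb'⟩ | ⟨hma', hmb'⟩ <;>
      rw [hma, hma'] at hsf <;>
      [(have hvs : (L:ℤ) * s = (q' + 2 * (ℓ₂:ℤ) - 1) - (q + 2 * (ℓ₂:ℤ) - 1) := by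
          linear_combination -hsf);
       (have hvs : (L:ℤ) * s = (2 * (ℓ₁:ℤ) - 1 - q') - (q + 2 * (ℓ₂:ℤ) - 1) := by
          linear_combination -hsf);
       (have hvs : (L:ℤ) * s = (q' + 2 * (ℓ₂:ℤ) - 1) - (2 * (ℓ₁:ℤ) - 1 - q) := by
          linear_combination -hsf);
       (have hvs : (L:ℤ) * s = (2 * (ℓ₁:ℤ) - 1 - q') - (2 * (ℓ₁:ℤ) - 1 - q) := by
          linear_combination -hsf)] <;>
      (have hbs := LS_cases hL0 hvs (by omega) (by omega)) <;>
      (rcases hbs with rfl | rfl | rfl <;> rcases hbt with rfl | rfl | rfl <;> omega)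
  rw [perimeter_eq_four_mul hL6 _ _ (Box_mem_psi η ℓ₁ ℓ₂),
    Fset_Box_eq hL6 η ℓ₁ ℓ₂ hord hub hsm,
    Set.ncard_image_of_injOn hinjon,
    show Set.Icc (-(ℓ₂ : ℤ)) (ℓ₁ : ℤ) = ↑(Finset.Icc (-(ℓ₂ : ℤ)) (ℓ₁ : ℤ)) by simp,
    Set.ncard_coe_finset, Int.card_Icc]
  omega

lemma perimeter_image (hL6 : 6 ≤ L) (f : Site L → Site L) (hf : Function.Involutive f)
    (hadj : ∀ v w, adjacent L v w ↔ adjacent L (f v) (f w)) (A : Set (Site L)) :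
    perimeter L (f '' A) = perimeter L A := by
  haveI : NeZero L := ⟨by omega⟩
  have hmem : ∀ (B : Set (Site L)) (u : Site L), u ∈ f '' B ↔ f u ∈ B := by
    intro B u
    constructor
    · rintro ⟨a, ha, rfl⟩; rwa [hf a]
    · intro h; exact ⟨f u, h, hf u⟩
  have hbp : boundaryPairs L (f '' A) = (fun pr : Site L × Site L => (f pr.1, f pr.2)) ''
      boundaryPairs L A := by
    ext ⟨a, b⟩
    simp only [boundaryPairs, Set.mem_setOf_eq, Set.mem_image]
    constructor
    · rintro ⟨h1, h2, h3⟩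
      refine ⟨(f a, f b), ⟨(hmem A a).1 h1, fun hc => h2 ⟨f b, hc, hf b⟩, (hadj a b).1 h3⟩, ?_⟩
      show (f (f a), f (f b)) = (a, b)
      rw [hf a, hf b]
    · rintro ⟨⟨x, y⟩, ⟨h1, h2, h3⟩, heq⟩
      obtain ⟨rfl, rfl⟩ : f x = a ∧ f y = b := ⟨congrArg Prod.fst heq, congrArg Prod.snd heq⟩
      refine ⟨⟨x, h1, rfl⟩, fun hc => ?_, (hadj x y).1 h3⟩
      obtain ⟨z, hz, he⟩ := hc
      exact h2 (by rwa [hf.injective he] at hz)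
  have hinj : Function.Injective (fun pr : Site L × Site L => (f pr.1, f pr.2)) := by
    intro pr pr' h
    have h1 := congrArg Prod.fst h
    have h2 := congrArg Prod.snd h
    simp only at h1 h2
    exact Prod.ext (hf.injective h1) (hf.injective h2)
  rw [perimeter, perimeter, hbp, Set.ncard_image_of_injective _ hinj]

lemma adjacent_reflect (c : ZMod L) (v w : Site L) :
    adjacent L v w ↔ adjacent L ((v.1, c - v.2) : Site L) ((w.1, c - w.2) : Site L) := by
  have key : ∀ x y : ZMod L, (c - x = c - y + 1) ↔ y = x + 1 := by
    intro x y
    constructor <;> intro h <;> linear_combination h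
  constructor
  · rintro (⟨h1, h2⟩ | ⟨h1, h2⟩)
    · exact Or.inl ⟨by show c - v.2 = c - w.2; rw [h1], h2⟩
    · rcases h2 with h2 | h2
      · exact Or.inr ⟨h1, Or.inr ((key w.2 v.2).2 h2)⟩
      · exact Or.inr ⟨h1, Or.inl ((key v.2 w.2).2 h2)⟩
  · rintro (⟨h1, h2⟩ | ⟨h1, h2⟩)
    · exact Or.inl ⟨sub_right_inj.1 h1, h2⟩
    · rcases h2 with h2 | h2
      · exact Or.inr ⟨h1, Or.inr ((key v.2 w.2).1 h2)⟩
      · exact Or.inr ⟨h1, Or.inl ((key w.2 v.2).1 h2)⟩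

lemma reflect_involutive (c : ZMod L) :
    Function.Involutive (fun v : Site L => ((v.1, c - v.2) : Site L)) := by
  intro v
  simp [Prod.ext_iff, sub_sub_cancel]

lemma Box_reflect (η : Site L) (ℓ₁ ℓ₂ : ℕ) :
    (fun v : Site L => ((v.1, 2 * η.2 - v.2) : Site L)) '' Box L η ℓ₁ ℓ₂ = Box L η ℓ₂ ℓ₁ := by
  have key : ∀ (a b : ℕ) (v : Site L), v ∈ Box L η a b →
      ((v.1, 2 * η.2 - v.2) : Site L) ∈ Box L η b a := by
    rintro a b v ⟨p, q, h1, h2, w1, w2, w3, w4⟩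
    refine ⟨p, -q, h1, ?_, by omega, by omega, by omega, by omega⟩
    show 2 * η.2 - v.2 = η.2 + ((-q : ℤ) : ZMod L)
    rw [h2]; push_cast; ring
  ext u
  constructor
  · rintro ⟨v, hv, rfl⟩; exact key _ _ v hv
  · intro hu
    refine ⟨((u.1, 2 * η.2 - u.2) : Site L), key _ _ u hu, ?_⟩
    exact reflect_involutive (2 * η.2) u

lemma Box_swap_perim (hL6 : 6 ≤ L) (η : Site L) (ℓ₁ ℓ₂ : ℕ) :
    perimeter L (Box L η ℓ₁ ℓ₂) = perimeter L (Box L η ℓ₂ ℓ₁) := by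
  rw [← Box_reflect η ℓ₁ ℓ₂,
    perimeter_image hL6 _ (reflect_involutive (2 * η.2)) (fun v w => adjacent_reflect _ v w)]

/-- Diagonal band winding around the torus. -/
def Band (L : ℕ) (η : Site L) (ℓ₂ : ℕ) : Set (Site L) :=
  {v | ∃ p q : ℤ, v.1 = η.1 + (p : ZMod L) ∧ v.2 = η.2 + (q : ZMod L) ∧
    -1 ≤ p - q ∧ p - q ≤ 2 * ℓ₂ - 1}

lemma Box_eq_Band (hL6 : 6 ≤ L) (η : Site L) (ℓ₂ : ℕ) :
    Box L η L ℓ₂ = Band L η ℓ₂ := by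
  have hL0 : (0:ℤ) < (L:ℤ) := by omega
  apply Set.Subset.antisymm
  · rintro v ⟨p, q, h1, h2, _, _, w3, w4⟩
    exact ⟨p, q, h1, h2, w3, w4⟩
  · rintro v ⟨p, q, h1, h2, w3, w4⟩
    have hdm := Int.mul_ediv_add_emod (p + q + 1) (2 * (L:ℤ))
    have hr0 : 0 ≤ (p + q + 1) % (2 * (L:ℤ)) := Int.emod_nonneg _ (by omega)
    have hr1 : (p + q + 1) % (2 * (L:ℤ)) < 2 * (L:ℤ) := Int.emod_lt_of_pos _ (by omega)
    set c := (p + q + 1) / (2 * (L:ℤ)) with hc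
    refine ⟨p - c * L, q - c * L, coord_shift (c := -c) h1 (by ring),
      coord_shift (c := -c) h2 (by ring), ?_, ?_, ?_, ?_⟩
    · have he : (p - c * L) + (q - c * L) = (p + q + 1) % (2 * (L:ℤ)) - 1 := by
        linear_combination -hdm
      omega
    · have he : (p - c * L) + (q - c * L) = (p + q + 1) % (2 * (L:ℤ)) - 1 := by
        linear_combination -hdm
      omega
    · have he : (p - c * L) - (q - c * L) = p - q := by ring
      omega
    · have he : (p - c * L) - (q - c * L) = p - q := by ring
      omega

lemma Band_mem_psi (η : Site L) (ℓ₂ : ℕ) :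
    ∀ v : Site L, v ∈ Band L η ℓ₂ ↔
      ((η.1 + η.2 - 1 - v.2, η.1 + η.2 - 1 - v.1) : Site L) ∈ Band L η ℓ₂ := by
  have key : ∀ v ∈ Band L η ℓ₂,
      ((η.1 + η.2 - 1 - v.2, η.1 + η.2 - 1 - v.1) : Site L) ∈ Band L η ℓ₂ := by
    rintro v ⟨p, q, h1, h2, w3, w4⟩
    refine ⟨-1 - q, -1 - p, ?_, ?_, by omega, by omega⟩
    · show η.1 + η.2 - 1 - v.2 = η.1 + ((-1 - q : ℤ) : ZMod L)
      rw [h2]; push_cast; ring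
    · show η.1 + η.2 - 1 - v.1 = η.2 + ((-1 - p : ℤ) : ZMod L)
      rw [h1]; push_cast; ring
  exact fun v => ⟨key v, fun h => by simpa [sub_sub_cancel] using key _ h⟩

lemma Band_perim (hL6 : 6 ≤ L) (η : Site L) (ℓ₂ : ℕ) (hsm : 2 * ℓ₂ + 2 ≤ L) :
    perimeter L (Band L η ℓ₂) = 4 * L := by
  haveI : NeZero L := ⟨by omega⟩
  have hL0 : (0:ℤ) < (L:ℤ) := by omega
  have hFeq : Fset L (1, 0) (Band L η ℓ₂) =
      (fun q : ℤ => ((η.1 + ((q + 2 * (ℓ₂:ℤ) - 1 : ℤ) : ZMod L), η.2 + (q : ZMod L)) : Site L)) ''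
        Set.Icc (0 : ℤ) ((L:ℤ) - 1) := by
    apply Set.Subset.antisymm
    · rintro u ⟨⟨p, q, h1, h2, w3, w4⟩, hnot⟩
      have hpq : p - q = 2 * (ℓ₂:ℤ) - 1 := by
        rcases eq_or_lt_of_le w4 with h | h
        · exact h
        exfalso
        apply hnot
        refine ⟨p + 1, q, ?_, ?_, by omega, by omega⟩
        · show u.1 + 1 = η.1 + ((p + 1 : ℤ) : ZMod L)
          rw [h1]; push_cast; ring
        · show u.2 + 0 = η.2 + (q : ZMod L)
          rw [h2]; ring
      have hdm := Int.mul_ediv_add_emod q (L:ℤ)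
      have hr0 : 0 ≤ q % (L:ℤ) := Int.emod_nonneg _ (by omega)
      have hr1 : q % (L:ℤ) < (L:ℤ) := Int.emod_lt_of_pos _ hL0
      refine ⟨q % (L:ℤ), ⟨hr0, by omega⟩, ?_⟩
      have e1 : u.1 = η.1 + ((q % (L:ℤ) + 2 * (ℓ₂:ℤ) - 1 : ℤ) : ZMod L) :=
        coord_shift (c := -(q / (L:ℤ))) h1 (by linear_combination hdm - hpq)
      have e2 : u.2 = η.2 + ((q % (L:ℤ) : ℤ) : ZMod L) :=
        coord_shift (c := -(q / (L:ℤ))) h2 (by linear_combination hdm)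
      ext
      · show η.1 + _ = u.1
        rw [e1]
      · show η.2 + _ = u.2
        rw [e2]
    · rintro u ⟨q, ⟨hq0, hq1⟩, rfl⟩
      constructor
      · exact ⟨q + 2 * (ℓ₂:ℤ) - 1, q, rfl, rfl, by omega, by omega⟩
      · rintro ⟨p₂, q₂, h1, h2, u3, u4⟩
        have e0 : η.1 + ((q + 2 * (ℓ₂:ℤ) - 1 : ℤ) : ZMod L) + 1 = η.1 + (p₂ : ZMod L) := h1
        have e1 : ((q + 2 * (ℓ₂:ℤ) : ℤ) : ZMod L) = (p₂ : ZMod L) := by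
          push_cast at e0 ⊢
          linear_combination e0
        have e0' : η.2 + (q : ZMod L) + 0 = η.2 + (q₂ : ZMod L) := h2
        have e2 : ((q : ℤ) : ZMod L) = (q₂ : ZMod L) := by
          push_cast at e0' ⊢
          linear_combination e0'
        obtain ⟨s, hs⟩ := int_shift e1
        obtain ⟨t, ht⟩ := int_shift e2
        have hval : (L:ℤ) * (s - t) = p₂ - q₂ - 2 * (ℓ₂:ℤ) := by
          linear_combination -hs + ht
        have := LS_cases hL0 hval (by omega) (by omega)
        rcases this with h | h | h <;> rw [h] at hval <;> omega
  have hinj : Set.InjOn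
      (fun q : ℤ => ((η.1 + ((q + 2 * (ℓ₂:ℤ) - 1 : ℤ) : ZMod L), η.2 + (q : ZMod L)) : Site L))
      (Set.Icc (0 : ℤ) ((L:ℤ) - 1)) := by
    intro q hq q' hq' heq
    simp only [Set.mem_Icc] at hq hq'
    have h2 := congrArg Prod.snd heq
    simp only at h2
    have e2 := add_left_cancel h2
    obtain ⟨t, ht⟩ := int_shift e2
    have hval : (L:ℤ) * t = q' - q := by linear_combination -ht
    have := LS_cases hL0 hval (by omega) (by omega)
    rcases this with h | h | h <;> rw [h] at hval <;> omega
  rw [perimeter_eq_four_mul hL6 _ _ (Band_mem_psi η ℓ₂), hFeq,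
    Set.ncard_image_of_injOn hinj,
    show Set.Icc (0 : ℤ) ((L:ℤ) - 1) = ↑(Finset.Icc (0 : ℤ) ((L:ℤ) - 1)) by simp,
    Set.ncard_coe_finset, Int.card_Icc]
  omega

/-- The full wrap-around diagonal. -/
def DiagSet (L : ℕ) (η : Site L) : Set (Site L) :=
  {v | ∃ p : ℤ, v.1 = η.1 + (p : ZMod L) ∧ v.2 = η.2 + ((-p : ℤ) : ZMod L)}

lemma degRhombus10_eq_DiagSet (hL6 : 6 ≤ L) (η : Site L) :
    degRhombus10 L η L = DiagSet L η := by
  have hL0 : (0:ℤ) < (L:ℤ) := by omega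
  apply Set.Subset.antisymm
  · rintro v ⟨k, hk, rfl⟩
    refine ⟨(k : ℤ), ?_, ?_⟩
    · show η.1 + (k : ZMod L) = η.1 + (((k : ℤ)) : ZMod L)
      push_cast; ring
    · show η.2 - (k : ZMod L) = η.2 + ((-(k : ℤ) : ℤ) : ZMod L)
      push_cast; ring
  · rintro v ⟨p, h1, h2⟩
    have hdm := Int.mul_ediv_add_emod p (L:ℤ)
    have hr0 : 0 ≤ p % (L:ℤ) := Int.emod_nonneg _ (by omega)
    have hr1 : p % (L:ℤ) < (L:ℤ) := Int.emod_lt_of_pos _ hL0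
    obtain ⟨k, hk⟩ : ∃ k : ℕ, (k : ℤ) = p % (L:ℤ) :=
      ⟨(p % (L:ℤ)).toNat, Int.toNat_of_nonneg hr0⟩
    refine ⟨k, by omega, ?_⟩
    have e1 : v.1 = η.1 + (((k : ℤ)) : ZMod L) :=
      coord_shift (c := -(p / (L:ℤ))) h1 (by linear_combination hk + hdm)
    have e2 : v.2 = η.2 + ((-(k : ℤ) : ℤ) : ZMod L) :=
      coord_shift (c := p / (L:ℤ)) h2 (by linear_combination -hk - hdm)
    ext
    · show v.1 = η.1 + (k : ZMod L)
      rw [e1]; push_cast; ring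
    · show v.2 = η.2 - (k : ZMod L)
      rw [e2]; push_cast; ring

lemma DiagSet_perim (hL6 : 6 ≤ L) (η : Site L) : perimeter L (DiagSet L η) = 4 * L := by
  haveI : NeZero L := ⟨by omega⟩
  have hL0 : (0:ℤ) < (L:ℤ) := by omega
  have hpsi : ∀ v : Site L, v ∈ DiagSet L η ↔
      ((η.1 + η.2 - v.2, η.1 + η.2 - v.1) : Site L) ∈ DiagSet L η := by
    have key : ∀ v ∈ DiagSet L η,
        ((η.1 + η.2 - v.2, η.1 + η.2 - v.1) : Site L) ∈ DiagSet L η := by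
      rintro v ⟨p, h1, h2⟩
      refine ⟨p, ?_, ?_⟩
      · show η.1 + η.2 - v.2 = η.1 + ((p : ℤ) : ZMod L)
        rw [h2]; push_cast; ring
      · show η.1 + η.2 - v.1 = η.2 + ((-p : ℤ) : ZMod L)
        rw [h1]; push_cast; ring
    exact fun v => ⟨key v, fun h => by simpa [sub_sub_cancel] using key _ h⟩
  have hF : Fset L (1, 0) (DiagSet L η) = DiagSet L η := by
    apply Set.Subset.antisymm
    · exact fun v hv => hv.1
    · intro v hv
      refine ⟨hv, ?_⟩
      rintro ⟨p₂, h1, h2⟩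
      obtain ⟨p, g1, g2⟩ := hv
      have e0 : η.1 + ((p : ℤ) : ZMod L) + 1 = η.1 + ((p₂ : ℤ) : ZMod L) := by
        rw [← g1]; exact h1
      have e1 : ((p + 1 : ℤ) : ZMod L) = ((p₂ : ℤ) : ZMod L) := by
        push_cast at e0 ⊢; linear_combination e0
      have e0' : η.2 + ((-p : ℤ) : ZMod L) + 0 = η.2 + ((-p₂ : ℤ) : ZMod L) := by
        rw [← g2]; exact h2
      have e2 : ((-p : ℤ) : ZMod L) = ((-p₂ : ℤ) : ZMod L) := by
        push_cast at e0' ⊢; linear_combination e0'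
      obtain ⟨s, hs⟩ := int_shift e1
      obtain ⟨t, ht⟩ := int_shift e2
      have hval : (L:ℤ) * (s + t) = -1 := by linear_combination -hs - ht
      have := LS_cases hL0 hval (by omega) (by omega)
      rcases this with h | h | h <;> rw [h] at hval <;> omega
  have himg : DiagSet L η =
      (fun q : ℤ => ((η.1 + (q : ZMod L), η.2 + ((-q : ℤ) : ZMod L)) : Site L)) ''
        Set.Icc (0 : ℤ) ((L:ℤ) - 1) := by
    apply Set.Subset.antisymm
    · rintro v ⟨p, h1, h2⟩
      have hdm := Int.mul_ediv_add_emod p (L:ℤ)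
      have hr0 : 0 ≤ p % (L:ℤ) := Int.emod_nonneg _ (by omega)
      have hr1 : p % (L:ℤ) < (L:ℤ) := Int.emod_lt_of_pos _ hL0
      refine ⟨p % (L:ℤ), ⟨hr0, by omega⟩, ?_⟩
      have e1 : v.1 = η.1 + ((p % (L:ℤ) : ℤ) : ZMod L) :=
        coord_shift (c := -(p / (L:ℤ))) h1 (by linear_combination hdm)
      have e2 : v.2 = η.2 + ((-(p % (L:ℤ)) : ℤ) : ZMod L) :=
        coord_shift (c := p / (L:ℤ)) h2 (by linear_combination -hdm)
      ext
      · show η.1 + _ = v.1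
        rw [e1]
      · show η.2 + _ = v.2
        rw [e2]
    · rintro v ⟨q, _, rfl⟩
      exact ⟨q, rfl, rfl⟩
  have hinj : Set.InjOn
      (fun q : ℤ => ((η.1 + (q : ZMod L), η.2 + ((-q : ℤ) : ZMod L)) : Site L))
      (Set.Icc (0 : ℤ) ((L:ℤ) - 1)) := by
    intro q hq q' hq' heq
    simp only [Set.mem_Icc] at hq hq'
    have h1 := congrArg Prod.fst heq
    simp only at h1
    have e1 := add_left_cancel h1
    obtain ⟨t, ht⟩ := int_shift e1
    have hval : (L:ℤ) * t = q' - q := by linear_combination -ht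
    have := LS_cases hL0 hval (by omega) (by omega)
    rcases this with h | h | h <;> rw [h] at hval <;> omega
  rw [perimeter_eq_four_mul hL6 _ _ hpsi, hF, himg,
    Set.ncard_image_of_injOn hinj,
    show Set.Icc (0 : ℤ) ((L:ℤ) - 1) = ↑(Finset.Icc (0 : ℤ) ((L:ℤ) - 1)) by simp,
    Set.ncard_coe_finset, Int.card_Icc]
  omega

lemma Box_univ (hL6 : 6 ≤ L) (η : Site L) (ℓ₁ ℓ₂ : ℕ) (ha : L ≤ ℓ₁) (hb : L ≤ 2 * ℓ₂) :
    Box L η ℓ₁ ℓ₂ = Set.univ := by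
  haveI : NeZero L := ⟨by omega⟩
  apply Set.eq_univ_of_forall
  intro v
  obtain ⟨p, hp0, hp1, hp⟩ := exists_coord_lift v.1 η.1
  obtain ⟨q, hq0, hq1, hq⟩ := exists_coord_lift v.2 η.2
  by_cases hB : -1 ≤ p - q
  · exact ⟨p, q, hp, hq, by omega, by omega, hB, by omega⟩
  · by_cases hA : p + q ≤ (L:ℤ) - 2
    · exact ⟨p + L, q, coord_shift (c := 1) hp (by ring), hq,
        by omega, by omega, by omega, by omega⟩
    · exact ⟨p, q - L, hp, coord_shift (c := -1) hq (by ring),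
        by omega, by omega, by omega, by omega⟩

lemma perimeter_univ : perimeter L (Set.univ : Set (Site L)) = 0 := by
  have h : boundaryPairs L (Set.univ : Set (Site L)) = ∅ := by
    ext ⟨a, b⟩
    simp [boundaryPairs]
  rw [perimeter, h, Set.ncard_empty]

lemma perimeter_compl [NeZero L] (A : Set (Site L)) : perimeter L Aᶜ = perimeter L A := by
  have hbp : boundaryPairs L Aᶜ = Prod.swap '' boundaryPairs L A := by
    ext ⟨a, b⟩
    simp only [boundaryPairs, Set.mem_setOf_eq, Set.mem_image, Set.mem_compl_iff]
    constructor
    · rintro ⟨h1, h2, h3⟩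
      exact ⟨(b, a), ⟨not_not.1 h2, h1, adjacent_symm h3⟩, rfl⟩
    · rintro ⟨⟨x, y⟩, ⟨h1, h2, h3⟩, heq⟩
      obtain ⟨rfl, rfl⟩ : y = a ∧ x = b := ⟨congrArg Prod.fst heq, congrArg Prod.snd heq⟩
      exact ⟨h2, not_not.2 h1, adjacent_symm h3⟩
  rw [perimeter, perimeter, hbp, Set.ncard_image_of_injective _ Prod.swap_injective]

lemma Box_compl (hL6 : 6 ≤ L) {K : ℕ} (hK : L = 2 * K) (η : Site L) (ℓ₁ ℓ₂ : ℕ)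
    (ha1 : K ≤ ℓ₁) (ha2 : ℓ₁ ≤ L - 1) (hb1 : K ≤ ℓ₂) (hb2 : ℓ₂ ≤ L - 1) :
    (Box L η ℓ₁ ℓ₂)ᶜ =
      Box L ((η.1 + (((ℓ₁:ℤ) + ℓ₂ + 1 - K : ℤ) : ZMod L),
        η.2 + (((ℓ₁:ℤ) - ℓ₂ - K : ℤ) : ZMod L)) : Site L) (L - 1 - ℓ₁) (L - 1 - ℓ₂) := by
  haveI : NeZero L := ⟨by omega⟩
  have hL0 : (0:ℤ) < (L:ℤ) := by omega
  ext v
  simp only [Set.mem_compl_iff]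
  constructor
  · intro h
    obtain ⟨p, hp0, hp1, hp⟩ := exists_coord_lift v.1 η.1
    obtain ⟨q, hq0, hq1, hq⟩ := exists_coord_lift v.2 η.2
    have hbox : ∀ p' q' : ℤ, v.1 = η.1 + (p' : ZMod L) → v.2 = η.2 + (q' : ZMod L) →
        -1 ≤ p' + q' → p' + q' ≤ 2 * (ℓ₁:ℤ) - 1 → -1 ≤ p' - q' → p' - q' ≤ 2 * (ℓ₂:ℤ) - 1 →
        False := fun p' q' e1 e2 f1 f2 f3 f4 => h ⟨p', q', e1, e2, f1, f2, f3, f4⟩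
    have hgoal : ∀ p' q' c₁ c₂ : ℤ, ((ℓ₁:ℤ) + ℓ₂ + 1 - K) + p' = p + c₁ * L →
        ((ℓ₁:ℤ) - ℓ₂ - K) + q' = q + c₂ * L →
        -1 ≤ p' + q' → p' + q' ≤ 2 * ((L:ℤ) - 1 - ℓ₁) - 1 →
        -1 ≤ p' - q' → p' - q' ≤ 2 * ((L:ℤ) - 1 - ℓ₂) - 1 →
        v ∈ Box L ((η.1 + (((ℓ₁:ℤ) + ℓ₂ + 1 - K : ℤ) : ZMod L),
          η.2 + (((ℓ₁:ℤ) - ℓ₂ - K : ℤ) : ZMod L)) : Site L) (L - 1 - ℓ₁) (L - 1 - ℓ₂) := by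
      intro p' q' c₁ c₂ e1 e2 f1 f2 f3 f4
      have hv1 : v.1 = η.1 + ((((ℓ₁:ℤ) + ℓ₂ + 1 - K) + p' : ℤ) : ZMod L) :=
        coord_shift (c := c₁) hp (by linear_combination e1)
      have hv2 : v.2 = η.2 + ((((ℓ₁:ℤ) - ℓ₂ - K) + q' : ℤ) : ZMod L) :=
        coord_shift (c := c₂) hq (by linear_combination e2)
      refine ⟨p', q', ?_, ?_, f1, by omega, f3, by omega⟩
      · show v.1 = η.1 + (((ℓ₁:ℤ) + ℓ₂ + 1 - K : ℤ) : ZMod L) + (p' : ZMod L)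
        rw [hv1]; push_cast; ring
      · show v.2 = η.2 + (((ℓ₁:ℤ) - ℓ₂ - K : ℤ) : ZMod L) + (q' : ZMod L)
        rw [hv2]; push_cast; ring
    by_cases hA : p + q ≤ (L:ℤ) - 2
    · by_cases hBlow : p - q ≤ -2
      · by_cases h2a : p + q ≤ 2 * (ℓ₁:ℤ) - 1 - L
        · exact (hbox (p + L) q (coord_shift (c := 1) hp (by ring)) hq
            (by omega) (by omega) (by omega) (by omega)).elim
        · by_cases h2b : p - q + 2 * (L:ℤ) ≤ 2 * (ℓ₂:ℤ) - 1
          · exact (hbox (p + L) (q - L) (coord_shift (c := 1) hp (by ring))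
              (coord_shift (c := -1) hq (by ring)) (by omega) (by omega) (by omega)
              (by omega)).elim
          · exact hgoal (p - ((ℓ₁:ℤ) + ℓ₂ + 1 - K) + L) (q - ((ℓ₁:ℤ) - ℓ₂ - K) - L) 1 (-1)
              (by ring) (by ring) (by omega) (by omega) (by omega) (by omega)
      · exact (hbox p q hp hq (by omega) (by omega) (by omega) (by omega)).elim
    · by_cases hBlow : p - q ≤ -2
      · exact (hbox p (q - L) hp (coord_shift (c := -1) hq (by ring))
          (by omega) (by omega) (by omega) (by omega)).elim
      · by_cases hBhigh : p - q ≤ (L:ℤ) - 2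
        · by_cases h2a : p + q ≤ 2 * (ℓ₁:ℤ) - 1
          · exact (hbox p q hp hq (by omega) (by omega) (by omega) (by omega)).elim
          · by_cases h2b : p - q + L ≤ 2 * (ℓ₂:ℤ) - 1
            · exact (hbox p (q - L) hp (coord_shift (c := -1) hq (by ring))
                (by omega) (by omega) (by omega) (by omega)).elim
            · exact hgoal (p - ((ℓ₁:ℤ) + ℓ₂ + 1 - K)) (q - ((ℓ₁:ℤ) - ℓ₂ - K) - L) 0 (-1)
                (by ring) (by ring) (by omega) (by omega) (by omega) (by omega)
        · exact (hbox (p - L) q (coord_shift (c := -1) hp (by ring)) hq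
            (by omega) (by omega) (by omega) (by omega)).elim
  · rintro ⟨p', q', e1, e2, f1, f2, f3, f4⟩ ⟨p, q, g1, g2, w1, w2, w3, w4⟩
    have h0 : η.1 + ((((ℓ₁:ℤ) + ℓ₂ + 1 - K : ℤ)) : ZMod L) + (p' : ZMod L) = η.1 + (p : ZMod L) := by
      have e1' : v.1 = η.1 + ((((ℓ₁:ℤ) + ℓ₂ + 1 - K : ℤ)) : ZMod L) + (p' : ZMod L) := e1
      rw [← e1', g1]
    have ee1 : ((((ℓ₁:ℤ) + ℓ₂ + 1 - K) + p' : ℤ) : ZMod L) = (p : ZMod L) := by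
      rw [add_assoc] at h0
      have := add_left_cancel h0
      push_cast at this ⊢
      linear_combination this
    have h0' : η.2 + ((((ℓ₁:ℤ) - ℓ₂ - K : ℤ)) : ZMod L) + (q' : ZMod L) = η.2 + (q : ZMod L) := by
      have e2' : v.2 = η.2 + ((((ℓ₁:ℤ) - ℓ₂ - K : ℤ)) : ZMod L) + (q' : ZMod L) := e2
      rw [← e2', g2]
    have ee2 : ((((ℓ₁:ℤ) - ℓ₂ - K) + q' : ℤ) : ZMod L) = (q : ZMod L) := by
      rw [add_assoc] at h0'
      have := add_left_cancel h0'
      push_cast at this ⊢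
      linear_combination this
    obtain ⟨s, hs⟩ := int_shift ee1
    obtain ⟨t, ht⟩ := int_shift ee2
    have hu : (L:ℤ) * (s + t) = (p + q) - (p' + q') - (2 * (ℓ₁:ℤ) + 1 - 2 * (K:ℤ)) := by
      linear_combination -hs - ht
    have hw : (L:ℤ) * (s - t) = (p - q) - (p' - q') - (2 * (ℓ₂:ℤ) + 1) := by
      linear_combination ht - hs
    have hbu := LS_cases hL0 hu (by omega) (by omega)
    have hbw := LS_cases hL0 hw (by omega) (by omega)
    rcases hbu with h | h | h <;> rcases hbw with h' | h' | h' <;>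
      rw [h] at hu <;> rw [h'] at hw <;> omega

lemma degRhombus10_eq_Box (η : Site L) (ℓ : ℕ) :
    degRhombus10 L η ℓ = Box L ((η.1 + 1, η.2) : Site L) 0 ℓ := by
  apply Set.Subset.antisymm
  · rintro v ⟨k, hk, rfl⟩
    refine ⟨(k : ℤ) - 1, -(k : ℤ), ?_, ?_, by omega, by omega, by omega, by omega⟩
    · show η.1 + (k : ZMod L) = η.1 + 1 + (((k : ℤ) - 1 : ℤ) : ZMod L)
      push_cast; ring
    · show η.2 - (k : ZMod L) = η.2 + ((-(k : ℤ) : ℤ) : ZMod L)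
      push_cast; ring
  · rintro v ⟨p, q, h1, h2, w1, w2, w3, w4⟩
    obtain ⟨k, hk⟩ : ∃ k : ℕ, (k : ℤ) = -q := ⟨(-q).toNat, Int.toNat_of_nonneg (by omega)⟩
    refine ⟨k, by omega, ?_⟩
    ext
    · show v.1 = η.1 + (k : ZMod L)
      have hp : p = (k : ℤ) - 1 := by omega
      rw [h1, hp]
      show η.1 + 1 + (((k : ℤ) - 1 : ℤ) : ZMod L) = η.1 + (k : ZMod L)
      push_cast; ring
    · show v.2 = η.2 - (k : ZMod L)
      have hq : q = -(k : ℤ) := by omega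
      rw [h2, hq]
      show η.2 + ((-(k : ℤ) : ℤ) : ZMod L) = η.2 - (k : ZMod L)
      push_cast; ring

end PerimeterAux

/-- **Formula for the rhombus perimeter.** -/
theorem rhombus_perimeter_formula (L : ℕ) (hL : Even L) (hL6 : 6 ≤ L)
    (ℓ₁ ℓ₂ : ℕ) (h1 : ℓ₁ ≤ L) (h2 : ℓ₂ ≤ L) (η : Site L)
    (hη : ((ℓ₁ = 0 ∨ ℓ₂ = 0) → η ∈ Ve L) ∧ ((ℓ₁ ≠ 0 ∧ ℓ₂ ≠ 0) → η ∈ Vo L)) :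
    perimeter L (rhombusFull L η ℓ₁ ℓ₂) =
      if max ℓ₁ ℓ₂ < L then
        (if min ℓ₁ ℓ₂ < L / 2 then 4 * (ℓ₁ + ℓ₂ + 1)
         else 4 * (2 * L - (ℓ₁ + ℓ₂ + 1)))
      else
        (if min ℓ₁ ℓ₂ < L / 2 then 4 * L else 0) := by
  haveI : NeZero L := ⟨by omega⟩
  obtain ⟨K, hK⟩ : ∃ K, L = 2 * K := by
    obtain ⟨k, hk⟩ := hL
    exact ⟨k, by omega⟩
  have hdeg : ∀ (θ : Site L) (ℓ : ℕ), ℓ ≤ L →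
      perimeter L (degRhombus10 L θ ℓ) = if ℓ < L then 4 * (ℓ + 1) else 4 * L := by
    intro θ ℓ hub
    by_cases hlt : ℓ < L
    · rw [if_pos hlt, degRhombus10_eq_Box θ ℓ, Box_swap_perim hL6 _ 0 ℓ,
        Box_perim_case1 hL6 _ ℓ 0 (by omega) (by omega) (by omega)]
    · rw [if_neg hlt, show ℓ = L by omega, degRhombus10_eq_DiagSet hL6 θ, DiagSet_perim hL6 θ]
  unfold rhombusFull
  by_cases hc1 : ℓ₁ = 0 ∧ ℓ₂ = 0
  · rw [if_pos hc1]
    obtain ⟨h01, h02⟩ := hc1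
    subst h01
    subst h02
    have hsing : ({η} : Set (Site L)) = degRhombus10 L η 0 := by
      ext w
      simp only [Set.mem_singleton_iff, degRhombus10, Set.mem_setOf_eq]
      constructor
      · rintro rfl
        exact ⟨0, le_refl 0, by ext <;> simp⟩
      · rintro ⟨k, hk, rfl⟩
        have hk0 : k = 0 := by omega
        subst hk0
        ext <;> simp
    rw [hsing, hdeg η 0 (by omega), if_pos (show (0:ℕ) < L by omega)]
    rw [if_pos (show max 0 0 < L by simpa using (by omega : 0 < L)),
      if_pos (show min 0 0 < L / 2 by simpa using (by omega : 0 < L / 2))]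
  · rw [if_neg hc1]
    by_cases hc2 : ℓ₂ = 0
    · rw [if_pos hc2]
      subst hc2
      rw [hdeg η ℓ₁ h1]
      simp only [Nat.max_zero, Nat.min_zero]
      by_cases hlt : ℓ₁ < L
      · rw [if_pos hlt, if_pos hlt, if_pos (show 0 < L / 2 by omega)]
      · rw [if_neg hlt, if_neg hlt, if_pos (show 0 < L / 2 by omega)]
    · rw [if_neg hc2]
      by_cases hc3 : ℓ₁ = 0
      · rw [if_pos hc3]
        subst hc3
        rw [hdeg η ℓ₂ h2]
        simp only [Nat.zero_max, Nat.zero_min]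
        by_cases hlt : ℓ₂ < L
        · rw [if_pos hlt, if_pos hlt, if_pos (show 0 < L / 2 by omega)]
          omega
        · rw [if_neg hlt, if_neg hlt, if_pos (show 0 < L / 2 by omega)]
      · rw [if_neg hc3]
        have h1p : 1 ≤ ℓ₁ := by omega
        have h2p : 1 ≤ ℓ₂ := by omega
        rw [rhombusND_eq_Box η ℓ₁ ℓ₂ h1p h2p]
        rcases Nat.lt_or_ge (max ℓ₁ ℓ₂) L with hmax | hmax
        · rw [if_pos hmax]
          obtain ⟨hm1, hm2⟩ := Nat.max_lt.1 hmax
          rcases Nat.lt_or_ge (min ℓ₁ ℓ₂) (L / 2) with hmin | hmin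
          · rw [if_pos hmin]
            rcases Nat.le_total ℓ₂ ℓ₁ with hord | hord
            · rw [min_eq_right hord] at hmin
              rw [Box_perim_case1 hL6 η ℓ₁ ℓ₂ hord (by omega) (by omega)]
            · rw [min_eq_left hord] at hmin
              rw [Box_swap_perim hL6 η ℓ₁ ℓ₂,
                Box_perim_case1 hL6 η ℓ₂ ℓ₁ hord (by omega) (by omega)]
              ring_nf
          · rw [if_neg (not_lt.2 hmin)]
            obtain ⟨hKa, hKb⟩ := le_min_iff.1 hmin
            rw [← perimeter_compl (Box L η ℓ₁ ℓ₂),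
              Box_compl hL6 hK η ℓ₁ ℓ₂ (by omega) (by omega) (by omega) (by omega)]
            rcases Nat.le_total ℓ₁ ℓ₂ with hord | hord
            · rw [Box_perim_case1 hL6 _ (L - 1 - ℓ₁) (L - 1 - ℓ₂) (by omega) (by omega)
                (by omega)]
              omega
            · rw [Box_swap_perim hL6 _ (L - 1 - ℓ₁) (L - 1 - ℓ₂),
                Box_perim_case1 hL6 _ (L - 1 - ℓ₂) (L - 1 - ℓ₁) (by omega) (by omega)
                (by omega)]
              omega
        · rw [if_neg (not_lt.2 hmax)]
          have hone : ℓ₁ = L ∨ ℓ₂ = L := by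
            rcases Nat.le_total ℓ₁ ℓ₂ with h | h
            · right; have := Nat.max_eq_right h; omega
            · left; have := Nat.max_eq_left h; omega
          rcases Nat.lt_or_ge (min ℓ₁ ℓ₂) (L / 2) with hmin | hmin
          · rw [if_pos hmin]
            rcases hone with rfl | rfl
            · rw [min_eq_right h2] at hmin
              rw [Box_eq_Band hL6 η ℓ₂, Band_perim hL6 η ℓ₂ (by omega)]
            · rw [min_eq_left h1] at hmin
              rw [Box_swap_perim hL6 η ℓ₁ ℓ₂, Box_eq_Band hL6 η ℓ₁,
                Band_perim hL6 η ℓ₁ (by omega)]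
          · rw [if_neg (not_lt.2 hmin)]
            obtain ⟨hKa, hKb⟩ := le_min_iff.1 hmin
            have huniv : Box L η ℓ₁ ℓ₂ = Set.univ := by
              rcases hone with rfl | rfl
              · exact Box_univ hL6 η ℓ₁ ℓ₂ le_rfl (by omega)
              · rw [← Box_reflect η ℓ₂ ℓ₁, Box_univ hL6 η ℓ₂ ℓ₁ le_rfl (by omega)]
                apply Set.eq_univ_of_forall
                intro u
                exact ⟨(u.1, 2 * η.2 - u.2), trivial, reflect_involutive (2 * η.2) u⟩
            rw [huniv, perimeter_univ]

end HardCoreGrid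
end
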